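/- arXiv:2209.06176 — 5 statements merged into one kernel-verified Lean document; each statement's English description precedes it below -/
import Mathlib

section
/- Let 0 < p ≤ q < ∞ and let (a_k)_{k≥1} be a sequence of real numbers with |a_1| ≥ |a_2| ≥ ⋯ such that Σ_{k≥1} |a_k|^p < ∞. Then for every N ≥ 1, (Σ_{k>N} |a_k|^q)^{1/q} ≤ N^{-1/p + 1/q} (Σ_{k≥1} |a_k|^p)^{1/p}. -/
/-! Among the first `N` terms every `|a_k|^p` is at least `|a_N|^p`, so
`N |a_N|^p ≤ S := ∑ |a_k|^p`, i.e. `|a_N| ≤ c := (S/N)^{1/p}`. Every term of the tail is then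
at most `c`, whence `|a_k|^q ≤ c^{q-p} |a_k|^p` there, and summing gives
`∑_{k≥N} |a_k|^q ≤ c^{q-p} S = N c^q`. Taking `q`-th roots yields
`N^{1/q} c = N^{-1/p+1/q} S^{1/p}`. -/

open Finset

lemma Antitone.natCast_mul_le_tsum {f : ℕ → ℝ} (hf : Antitone f) (h0 : ∀ k, 0 ≤ f k)
    (hs : Summable f) (n : ℕ) : n * f n ≤ ∑' k, f k :=
  calc (n : ℝ) * f n = ∑ _k ∈ range n, f n := by simp
    _ ≤ ∑ k ∈ range n, f k := sum_le_sum fun k hk => hf (mem_range.1 hk).le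
    _ ≤ ∑' k, f k := hs.sum_le_tsum _ fun k _ => h0 k

lemma Real.rpow_le_rpow_sub_mul_rpow {x c p q : ℝ} (hx : 0 ≤ x) (hxc : x ≤ c) (hpq : p ≤ q)
    (hq : q ≠ 0) : x ^ q ≤ c ^ (q - p) * x ^ p :=
  calc x ^ q = x ^ (q - p) * x ^ p := by
        rw [← Real.rpow_add' hx (by simpa using hq), sub_add_cancel]
    _ ≤ c ^ (q - p) * x ^ p := by gcongr

section AntitoneAbs

variable {a : ℕ → ℝ} (hmono : Antitone fun k => |a k|) {p : ℝ}
  (hsum : Summable fun k => |a k| ^ p)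
include hmono hsum

lemma abs_le_tsum_abs_rpow_div_rpow_inv (hp : 0 < p) {N : ℕ} (hN : 0 < N) :
    |a N| ≤ ((∑' k, |a k| ^ p) / N) ^ p⁻¹ := by
  have hpow_anti : Antitone fun k => |a k| ^ p := fun i j hij =>
    Real.rpow_le_rpow (abs_nonneg _) (hmono hij) hp.le
  rw [Real.le_rpow_inv_iff_of_pos (abs_nonneg _) (by positivity) hp,
    le_div_iff₀' (by exact_mod_cast hN)]
  exact hpow_anti.natCast_mul_le_tsum (fun k => by positivity) hsum N

lemma tsum_abs_rpow_tail_le {q : ℝ} (hpq : p ≤ q) (hq : q ≠ 0) (N : ℕ) :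
    ∑' k, |a (N + k)| ^ q ≤ |a N| ^ (q - p) * ∑' k, |a k| ^ p := by
  have hbound (k : ℕ) : |a (N + k)| ^ q ≤ |a N| ^ (q - p) * |a (N + k)| ^ p :=
    Real.rpow_le_rpow_sub_mul_rpow (abs_nonneg _) (hmono (Nat.le_add_right N k)) hpq hq
  have htail : Summable fun k => |a (N + k)| ^ p := by
    simpa only [add_comm] using (summable_nat_add_iff N).2 hsum
  have hdom := htail.mul_left (|a N| ^ (q - p))
  calc ∑' k, |a (N + k)| ^ q ≤ ∑' k, |a N| ^ (q - p) * |a (N + k)| ^ p :=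
        (hdom.of_nonneg_of_le (fun _ => by positivity) hbound).tsum_le_tsum hbound hdom
    _ = |a N| ^ (q - p) * ∑' k, |a (N + k)| ^ p := tsum_mul_left
    _ ≤ |a N| ^ (q - p) * ∑' k, |a k| ^ p := mul_le_mul_of_nonneg_left
        (tsum_comp_le_tsum_of_inj hsum (fun _ => by positivity) (add_right_injective N))
        (by positivity)

end AntitoneAbs

/-- **Stechkin's lemma.** For `0 < p ≤ q` and a sequence `a` (here `a k` denotes the
`(k+1)`-st term `a_{k+1}`) with nonincreasing absolute values and `p`-summable powers,
the tail sum of `q`-th powers beyond the first `N` terms obeys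
`(∑_{k>N} |a_k|^q)^{1/q} ≤ N^{-1/p+1/q} (∑_{k≥1} |a_k|^p)^{1/p}`. -/
theorem stechkin (p q : ℝ) (hp : 0 < p) (hpq : p ≤ q) (a : ℕ → ℝ)
    (hmono : Antitone fun k => |a k|) (hsum : Summable fun k => |a k| ^ p)
    (N : ℕ) (hN : 1 ≤ N) :
    (∑' k : ℕ, |a (N + k)| ^ q) ^ (1 / q) ≤
      (N : ℝ) ^ (-1 / p + 1 / q) * (∑' k : ℕ, |a k| ^ p) ^ (1 / p) := by
  have hq : 0 < q := hp.trans_le hpq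
  have hNpos : (0 : ℝ) < N := by exact_mod_cast hN
  set S := ∑' k, |a k| ^ p
  have hS : 0 ≤ S := tsum_nonneg fun k => by positivity
  set c := (S / N) ^ p⁻¹ with hc
  have hS_eq : S = N * c ^ p := by
    rw [Real.rpow_inv_rpow (by positivity) hp.ne', mul_div_cancel₀ _ hNpos.ne']
  have htail : ∑' k, |a (N + k)| ^ q ≤ N * c ^ q :=
    calc ∑' k, |a (N + k)| ^ q ≤ |a N| ^ (q - p) * S :=
          tsum_abs_rpow_tail_le hmono hsum hpq hq.ne' N
      _ ≤ c ^ (q - p) * S := by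
          gcongr
          exact abs_le_tsum_abs_rpow_div_rpow_inv hmono hsum hp hN
      _ = N * c ^ q := by
          rw [hS_eq, mul_left_comm, ← Real.rpow_add' (by positivity) (by simpa using hq.ne'),
            sub_add_cancel]
  calc (∑' k, |a (N + k)| ^ q) ^ (1 / q) ≤ (N * c ^ q) ^ (1 / q) := by gcongr
    _ = N ^ (1 / q) * c := by
        rw [Real.mul_rpow hNpos.le (by positivity), one_div,
          Real.rpow_rpow_inv (by positivity) hq.ne']
    _ = N ^ (-1 / p + 1 / q) * S ^ (1 / p) := by
        rw [hc, Real.div_rpow hS hNpos.le, Real.rpow_add hNpos, neg_div,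
          Real.rpow_neg hNpos.le, one_div, one_div]
        ring
end

section
/- Let β > 1, let φ_β(y) = exp(−|y|^β/β) / (2 β^{1/β} Γ(1 + 1/β)) be the β-Gaussian density, and let 0 ≤ α ≤ 1/2. Then ∫_ℝ e^{α|y|} φ_β(y) dy ≤ exp(2α). -/
open Real MeasureTheory

/-- The β-Gaussian (generalized Gaussian) density with unit scale. -/
noncomputable def betaGaussianDensity (β y : ℝ) : ℝ :=
  Real.exp (-(|y| ^ β) / β) / (2 * β ^ (1 / β) * Real.Gamma (1 + 1 / β))

/-!
Young's inequality `t ≤ t ^ β / β + (β - 1) / β` gives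
`α |y| - |y| ^ β / β ≤ α (β - 1) / β - (1 - α) |y| ^ β / β`, so the integrand is dominated by
`e^{α (β - 1) / β}` times a β-Gaussian with a smaller exponent, whose mass is `(1 - α)^{-1/β}` by
scaling. For `α ≤ 1/2` we have `(1 - α)⁻¹ ≤ 1 + 2α ≤ e^{2α}`, and the two resulting exponents
`α (β - 1) / β + 2α / β` add up to at most `2α`.
-/

lemma le_rpow_div_add_of_one_lt {β t : ℝ} (hβ : 1 < β) (ht : 0 ≤ t) :
    t ≤ t ^ β / β + (β - 1) / β := by
  simpa [Real.conjExponent, one_div_div] using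
    Real.young_inequality_of_nonneg ht zero_le_one (Real.HolderConjugate.conjExponent hβ)

lemma integral_exp_neg_mul_abs_rpow {p b : ℝ} (hp : 0 < p) (hb : 0 < b) :
    ∫ y : ℝ, exp (-b * |y| ^ p) = 2 * (b ^ (-1 / p) * Gamma (1 / p + 1)) := by
  rw [integral_comp_abs (f := fun x => exp (-b * x ^ p)), integral_exp_neg_mul_rpow hp hb]

lemma integrable_exp_neg_mul_abs_rpow {p b : ℝ} (hp : 0 < p) (hb : 0 < b) :
    Integrable fun y : ℝ => exp (-b * |y| ^ p) :=
  .of_integral_ne_zero <| by rw [integral_exp_neg_mul_abs_rpow hp hb]; positivity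

lemma integral_exp_neg_div_mul_abs_rpow {β c : ℝ} (hβ : 0 < β) (hc : 0 < c) :
    ∫ y : ℝ, exp (-(c / β) * |y| ^ β) = 2 * β ^ (1 / β) * Gamma (1 + 1 / β) * c ^ (-1 / β) := by
  rw [integral_exp_neg_mul_abs_rpow hβ (div_pos hc hβ), div_rpow hc.le hβ.le, neg_div,
    rpow_neg hβ.le, add_comm (1 / β)]
  field_simp

lemma exp_mul_abs_mul_exp_neg_rpow_div_le {α β : ℝ} (hα : 0 ≤ α) (hβ : 1 < β) (y : ℝ) :
    exp (α * |y|) * exp (-(|y| ^ β) / β) ≤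
      exp (α * (β - 1) / β) * exp (-((1 - α) / β) * |y| ^ β) := by
  rw [← exp_add, ← exp_add, exp_le_exp]
  have young := mul_le_mul_of_nonneg_left (le_rpow_div_add_of_one_lt hβ (abs_nonneg y)) hα
  linear_combination young

lemma inv_one_sub_le_exp_two_mul {α : ℝ} (hα0 : 0 ≤ α) (hα : α ≤ 1 / 2) :
    (1 - α)⁻¹ ≤ exp (2 * α) :=
  calc (1 - α)⁻¹ ≤ 2 * α + 1 := by
        rw [inv_le_iff_one_le_mul₀' (by linarith)]
        nlinarith
    _ ≤ exp (2 * α) := add_one_le_exp _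

lemma one_sub_rpow_neg_le_exp {α p : ℝ} (hα0 : 0 ≤ α) (hα : α ≤ 1 / 2) (hp : 0 ≤ p) :
    (1 - α) ^ (-p) ≤ exp (2 * α * p) := by
  rw [rpow_neg (by linarith), ← inv_rpow (by linarith), exp_mul]
  exact rpow_le_rpow (by bound) (inv_one_sub_le_exp_two_mul hα0 hα) hp

/-- For `β > 1` and `0 ≤ α ≤ 1/2`, `∫_ℝ e^{α|y|} φ_β(y) dy ≤ exp(2α)`. -/
theorem exp_moment_betaGaussian_le (β α : ℝ) (hβ : 1 < β) (hα0 : 0 ≤ α) (hα : α ≤ 1 / 2) :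
    (∫ y : ℝ, Real.exp (α * |y|) * betaGaussianDensity β y) ≤ Real.exp (2 * α) := by
  have hβ0 : 0 < β := by linarith
  set Z := 2 * β ^ (1 / β) * Gamma (1 + 1 / β)
  have hZ : 0 < Z := by positivity
  calc ∫ y, exp (α * |y|) * betaGaussianDensity β y
      = (∫ y, exp (α * |y|) * exp (-(|y| ^ β) / β)) / Z := by
        simp_rw [betaGaussianDensity, mul_div_assoc']
        exact integral_div Z _
    _ ≤ (∫ y, exp (α * (β - 1) / β) * exp (-((1 - α) / β) * |y| ^ β)) / Z := by
        refine div_le_div_of_nonneg_right ?_ hZ.le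
        exact integral_mono_of_nonneg (.of_forall fun y => by positivity)
          ((integrable_exp_neg_mul_abs_rpow hβ0 (by bound)).const_mul _)
          (.of_forall (exp_mul_abs_mul_exp_neg_rpow_div_le hα0 hβ))
    _ = exp (α * (β - 1) / β) * (1 - α) ^ (-(1 / β)) := by
        rw [integral_const_mul, integral_exp_neg_div_mul_abs_rpow hβ0 (by linarith), neg_div,
          mul_div_assoc, mul_div_cancel_left₀ _ hZ.ne']
    _ ≤ exp (α * (β - 1) / β) * exp (2 * α * (1 / β)) := by
        gcongr
        exact one_sub_rpow_neg_le_exp hα0 hα (by positivity)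
    _ ≤ exp (2 * α) := by
        rw [← exp_add, exp_le_exp, ← mul_div_assoc, mul_one, ← add_div, div_le_iff₀ hβ0]
        nlinarith
end

section
/- Let β ≥ 1 and ν ≥ 0. Then the ν-th absolute moment of the β-Gaussian distribution satisfies β^{ν/β} Γ((ν+1)/β) / Γ(1/β) ≤ Γ(ν+1); equivalently, ∫_ℝ |y|^ν φ_β(y) dy ≤ ∫_ℝ |y|^ν φ_1(y) dy, where φ_β is the β-Gaussian density φ_β(y) = exp(−|y|^β/β)/(2β^{1/β}Γ(1+1/β)). -/
open Real MeasureTheory Finset Filter Topology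

lemma exp_21_le : Real.exp (21/100 : ℝ) ≤ 31/25 := by
  have h := Real.exp_bound' (x := 21/100) (by norm_num) (by norm_num) (n := 3) (by norm_num)
  calc Real.exp (21/100 : ℝ) ≤ _ := h
    _ ≤ 31/25 := by norm_num [Finset.sum_range_succ, Nat.factorial]

lemma log_31_25 : (21:ℝ)/100 ≤ Real.log (31/25) := by
  rw [Real.le_log_iff_exp_le (by norm_num)]
  exact exp_21_le

lemma log_tangent {s : ℝ} (hs : 0 < s) : Real.log s ≤ (31/25) * s - 1 - Real.log (31/25) := by
  have h1 : Real.log (s * (31/25)) ≤ s * (31/25) - 1 := Real.log_le_sub_one_of_pos (by positivity)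
  rw [Real.log_mul (ne_of_gt hs) (by norm_num)] at h1
  linarith

lemma h_hasDeriv {s : ℝ} (hs : 0 < s) :
    HasDerivAt (fun s : ℝ => (1-s)*(41/100 + (31/50)*s) + s * Real.log s)
      (-(41/100 + (31/50)*s) + (1-s)*(31/50) + (Real.log s + 1)) s := by
  have h1 : HasDerivAt (fun s : ℝ => (1-s)*(41/100 + (31/50)*s))
      ((-1) * (41/100 + (31/50)*s) + (1-s)*((31/50) * 1)) s :=
    ((hasDerivAt_id s).const_sub 1).mul (((hasDerivAt_id s).const_mul (31/50)).const_add (41/100))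
  have h2 : HasDerivAt (fun s : ℝ => s * Real.log s) (1 * Real.log s + s * s⁻¹) s :=
    (hasDerivAt_id s).mul (Real.hasDerivAt_log (ne_of_gt hs))
  have h3 := h1.add h2
  refine h3.congr_deriv ?_
  rw [mul_inv_cancel₀ (ne_of_gt hs)]
  ring

lemma h_nonneg {t : ℝ} (ht0 : 0 < t) (ht1 : t ≤ 1) :
    0 ≤ (1-t)*(41/100 + (31/50)*t) + t * Real.log t := by
  set h : ℝ → ℝ := fun s => (1-s)*(41/100 + (31/50)*s) + s * Real.log s with hh
  have hderiv_nonpos : ∀ s ∈ Set.Ioo (0:ℝ) 1, deriv h s ≤ 0 := by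
    intro s hs
    rw [(h_hasDeriv hs.1).deriv]
    have := log_tangent hs.1
    have := log_31_25
    nlinarith
  rcases eq_or_lt_of_le ht1 with rfl | ht1'
  · simp [hh]
  · have hanti : AntitoneOn h (Set.Icc t 1) := by
      apply antitoneOn_of_deriv_nonpos (convex_Icc t 1)
      · intro s hs
        exact ((h_hasDeriv (lt_of_lt_of_le ht0 hs.1)).differentiableAt).continuousAt.continuousWithinAt
      · intro s hs
        rw [interior_Icc] at hs
        exact ((h_hasDeriv (lt_trans ht0 hs.1)).differentiableAt).differentiableWithinAt
      · intro s hs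
        rw [interior_Icc] at hs
        exact hderiv_nonpos s ⟨lt_trans ht0 hs.1, hs.2⟩
    have h1 : h 1 = 0 := by simp [hh]
    have := hanti (Set.left_mem_Icc.2 (le_of_lt ht1')) (Set.right_mem_Icc.2 (le_of_lt ht1')) (le_of_lt ht1')
    rw [h1] at this
    exact this

noncomputable def Hsum (n : ℕ) : ℝ := ∑ k ∈ Finset.range n, (1:ℝ)/(k+1)
noncomputable def csum (n : ℕ) : ℝ := ∑ k ∈ Finset.range n, (1:ℝ)/((k:ℝ)+2)^2

lemma Hsum_129_le : Hsum 129 ≤ 5.442 := by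
  rw [Hsum]; norm_num [Finset.sum_range_succ]

lemma csum_54_ge : (31:ℝ)/50 ≤ csum 54 := by
  rw [csum]; norm_num [Finset.sum_range_succ]

lemma csum_ge {n : ℕ} (hn : 54 ≤ n) : (31:ℝ)/50 ≤ csum n := by
  refine le_trans csum_54_ge ?_
  apply Finset.sum_le_sum_of_subset_of_nonneg (Finset.range_subset_range.2 hn)
  intro k _ _
  positivity

lemma A_ge {n : ℕ} (hn : 128 ≤ n) : (41:ℝ)/100 ≤ Real.log n - Hsum (n+1) + 1 := by
  induction n, hn using Nat.le_induction with
  | base =>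
    have h2 : (0.6931471803 : ℝ) < Real.log 2 := Real.log_two_gt_d9
    have h128 : Real.log 128 = 7 * Real.log 2 := by
      rw [show (128:ℝ) = 2^(7:ℕ) by norm_num, Real.log_pow]; push_cast; ring
    have := Hsum_129_le
    have : Real.log (128:ℕ) - Hsum 129 + 1 ≥ 7 * 0.6931471803 - 5.442 + 1 := by
      push_cast
      rw [h128]
      have : (7:ℝ) * 0.6931471803 ≤ 7 * Real.log 2 := by linarith
      linarith
    linarith
  | succ n hn ih =>
    have hn0 : (0:ℝ) < n := by positivity
    have key : Real.log n + 1/((n:ℝ)+2) ≤ Real.log (n+1) := by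
      have h1 : Real.log ((n:ℝ)/((n:ℝ)+1)) ≤ (n:ℝ)/((n:ℝ)+1) - 1 :=
        Real.log_le_sub_one_of_pos (by positivity)
      rw [Real.log_div (ne_of_gt hn0) (by positivity)] at h1
      have h2 : (n:ℝ)/((n:ℝ)+1) - 1 = -(1/((n:ℝ)+1)) := by field_simp; ring
      have h3 : (1:ℝ)/((n:ℝ)+2) ≤ 1/((n:ℝ)+1) := by
        apply div_le_div_of_nonneg_left (by norm_num) (by positivity) (by linarith)
      linarith
    have hHs : Hsum (n+1+1) = Hsum (n+1) + 1/((n:ℝ)+2) := by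
      rw [Hsum, Hsum, Finset.sum_range_succ]
      push_cast
      norm_num
      ring
    push_cast
    push_cast at ih
    rw [hHs]
    linarith

lemma deriv_lower {t y : ℝ} (ht0 : 0 < t) (ht1 : t ≤ 1) (hy : 1 ≤ y) {n : ℕ} (hn : 128 ≤ n) :
    0 ≤ (1-t) * Real.log n - (∑ k ∈ Finset.range (n+1), (1/(y+(k:ℝ)) - t/(t*y+(k:ℝ)))) + t * Real.log t := by
  have hy0 : (0:ℝ) < y := lt_of_lt_of_le one_pos hy
  have step1 : ∑ k ∈ Finset.range (n+1), (1/(y+(k:ℝ)) - t/(t*y+(k:ℝ)))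
      ≤ ∑ k ∈ Finset.range (n+1), ((k:ℝ)*(1-t)/((1+(k:ℝ))*(t+(k:ℝ)))) := by
    apply Finset.sum_le_sum
    intro k _
    have hk0 : (0:ℝ) ≤ (k:ℝ) := Nat.cast_nonneg k
    have d1 : (0:ℝ) < y + k := by linarith
    have d2 : (0:ℝ) < t*y + k := by nlinarith
    have d3 : (0:ℝ) < 1 + (k:ℝ) := by linarith
    have d4 : (0:ℝ) < t + (k:ℝ) := by linarith
    have hid : 1/(y+(k:ℝ)) - t/(t*y+(k:ℝ)) = (k:ℝ)*(1-t)/((y+(k:ℝ))*(t*y+(k:ℝ))) := by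
      field_simp; ring
    rw [hid]
    apply div_le_div_of_nonneg_left (by nlinarith) (by positivity) ?_
    have e1 : 1 + (k:ℝ) ≤ y + k := by linarith
    have e2 : t + (k:ℝ) ≤ t*y + k := by nlinarith
    exact mul_le_mul e1 e2 (le_of_lt d4) (le_of_lt d1)
  have step2 : ∑ k ∈ Finset.range (n+1), ((k:ℝ)*(1-t)/((1+(k:ℝ))*(t+(k:ℝ))))
      ≤ (1-t) * (Hsum (n+1) - 1 - t * csum n) := by
    rw [Finset.sum_range_succ']
    have f0 : ((0:ℕ):ℝ)*(1-t)/((1+((0:ℕ):ℝ))*(t+((0:ℕ):ℝ))) = 0 := by norm_num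
    rw [f0, add_zero]
    have hterm : ∀ k ∈ Finset.range n, (((k+1:ℕ)):ℝ)*(1-t)/((1+((k+1:ℕ):ℝ))*(t+((k+1:ℕ):ℝ)))
        ≤ (1-t) * (1/((k:ℝ)+2) - t/((k:ℝ)+2)^2) := by
      intro k _
      have hk0 : (0:ℝ) ≤ (k:ℝ) := Nat.cast_nonneg k
      push_cast
      have d1 : (0:ℝ) < 2 + (k:ℝ) := by linarith
      have d2 : (0:ℝ) < t + ((k:ℝ)+1) := by linarith
      have hrhs : (1-t) * (1/((k:ℝ)+2) - t/((k:ℝ)+2)^2) = (1-t)*((k:ℝ)+2-t)/((k:ℝ)+2)^2 := by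
        field_simp
      rw [hrhs, div_le_div_iff₀ (by positivity) (by positivity)]
      nlinarith [mul_nonneg (mul_nonneg (mul_nonneg ht0.le (sub_nonneg.2 ht1)) d1.le) (sub_nonneg.2 ht1)]
    calc ∑ k ∈ Finset.range n, (((k+1:ℕ)):ℝ)*(1-t)/((1+((k+1:ℕ):ℝ))*(t+((k+1:ℕ):ℝ)))
        ≤ ∑ k ∈ Finset.range n, (1-t) * (1/((k:ℝ)+2) - t/((k:ℝ)+2)^2) := Finset.sum_le_sum hterm
      _ = (1-t) * (Hsum (n+1) - 1 - t * csum n) := by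
          rw [← Finset.mul_sum]
          congr 1
          rw [Finset.sum_sub_distrib]
          have hH : Hsum (n+1) = 1 + ∑ k ∈ Finset.range n, 1/((k:ℝ)+2) := by
            rw [Hsum, Finset.sum_range_succ']
            push_cast
            norm_num [add_comm]
            exact Finset.sum_congr rfl (fun x _ => by ring_nf)
          have e2 : ∑ x ∈ Finset.range n, t/((x:ℝ)+2)^2 = t * csum n := by
            rw [csum, Finset.mul_sum]
            apply Finset.sum_congr rfl
            intros; ring
          rw [hH, e2]
          ring
  have hA := A_ge hn
  have hc := csum_ge (by omega : 54 ≤ n)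
  have hh := h_nonneg ht0 ht1
  have ht1' : (0:ℝ) ≤ 1 - t := by linarith
  nlinarith [mul_nonneg ht1' (sub_nonneg.2 hA), mul_nonneg (mul_nonneg ht1' (le_of_lt ht0)) (sub_nonneg.2 hc)]



theorem gamma_key {t x : ℝ} (ht0 : 0 < t) (ht1 : t ≤ 1) (hx : 1 ≤ x) :
    Real.Gamma (t*x) * t ^ (-((x-1)*t)) ≤ Real.Gamma x * Real.Gamma t := by
  set F : ℕ → ℝ → ℝ := fun n y => y * ((1-t)*Real.log n)
      - (∑ k ∈ Finset.range (n+1), (Real.log (y+(k:ℝ)) - Real.log (t*y+(k:ℝ))))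
      + (y-1)*(t*Real.log t) with hF
  have hx0 : (0:ℝ) < x := lt_of_lt_of_le one_pos hx
  -- derivative of F n at y > 0
  have hderivF : ∀ (n : ℕ) {y : ℝ}, 0 < y → HasDerivAt (F n)
      ((1-t)*Real.log n - (∑ k ∈ Finset.range (n+1), (1/(y+(k:ℝ)) - t/(t*y+(k:ℝ)))) + t*Real.log t) y := by
    intro n y hy
    have h1 : HasDerivAt (fun y : ℝ => y * ((1-t)*Real.log n)) (1 * ((1-t)*Real.log n)) y :=
      (hasDerivAt_id y).mul_const _
    have h3 : HasDerivAt (fun y : ℝ => (y-1)*(t*Real.log t)) (1 * (t*Real.log t)) y :=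
      ((hasDerivAt_id y).sub_const 1).mul_const _
    have h2 : HasDerivAt (fun y : ℝ => ∑ k ∈ Finset.range (n+1), (Real.log (y+(k:ℝ)) - Real.log (t*y+(k:ℝ))))
        (∑ k ∈ Finset.range (n+1), (1/(y+(k:ℝ)) - t*1/(t*y+(k:ℝ)))) y := by
      apply HasDerivAt.fun_sum
      intro k _
      have d1 : (0:ℝ) < y + k := by positivity
      have d2 : (0:ℝ) < t*y + k := by positivity
      have g1 : HasDerivAt (fun y : ℝ => Real.log (y+(k:ℝ))) (1/(y+(k:ℝ))) y := by
        simpa using ((hasDerivAt_id y).add_const (k:ℝ)).log (ne_of_gt d1)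
      have g2 : HasDerivAt (fun y : ℝ => Real.log (t*y+(k:ℝ))) (t*1/(t*y+(k:ℝ))) y := by
        exact (((hasDerivAt_id y).const_mul t).add_const (k:ℝ)).log (ne_of_gt d2)
      exact g1.sub g2
    have h4 := (h1.sub h2).add h3
    refine h4.congr_deriv ?_
    have : ∑ k ∈ Finset.range (n+1), (1/(y+(k:ℝ)) - t*1/(t*y+(k:ℝ)))
        = ∑ k ∈ Finset.range (n+1), (1/(y+(k:ℝ)) - t/(t*y+(k:ℝ))) := by
      apply Finset.sum_congr rfl; intros; ring
    rw [this]; ring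
  -- monotonicity of F n on [1, ∞)
  have hmono : ∀ n : ℕ, 128 ≤ n → F n 1 ≤ F n x := by
    intro n hn
    have hmo : MonotoneOn (F n) (Set.Ici 1) := by
      apply monotoneOn_of_deriv_nonneg (convex_Ici 1)
      · intro y hy
        exact ((hderivF n (lt_of_lt_of_le one_pos hy)).differentiableAt).continuousAt.continuousWithinAt
      · intro y hy
        rw [interior_Ici] at hy
        exact ((hderivF n (lt_trans one_pos hy)).differentiableAt).differentiableWithinAt
      · intro y hy
        rw [interior_Ici] at hy
        rw [(hderivF n (lt_trans one_pos hy)).deriv]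
        exact deriv_lower ht0 ht1 (le_of_lt hy) hn
    exact hmo Set.self_mem_Ici (Set.mem_Ici.2 hx) hx
  -- identity with GammaSeq
  have hlogGS : ∀ (s : ℝ), 0 < s → ∀ (n : ℕ), 1 ≤ n →
      Real.log (Real.GammaSeq s n) = s * Real.log n + Real.log (n.factorial : ℝ)
        - ∑ k ∈ Finset.range (n+1), Real.log (s+(k:ℝ)) := by
    intro s hs n hn
    have hn0 : (0:ℝ) < n := by exact_mod_cast hn
    have hprod : (0:ℝ) < ∏ j ∈ Finset.range (n+1), (s + (j:ℝ)) := by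
      apply Finset.prod_pos; intro j _; positivity
    have hfact : (0:ℝ) < (n.factorial : ℝ) := by exact_mod_cast Nat.factorial_pos n
    rw [Real.GammaSeq, Real.log_div (by positivity) (ne_of_gt hprod),
      Real.log_mul (by positivity) (ne_of_gt hfact), Real.log_rpow hn0,
      Real.log_prod (s := Finset.range (n+1)) (f := fun j => s + (j:ℝ)) (fun j _ => (by positivity : (0:ℝ) < s + (j:ℝ)).ne')]
  have hFeq : ∀ (y : ℝ), 0 < y → ∀ (n : ℕ), 1 ≤ n →
      F n y = Real.log (Real.GammaSeq y n) - Real.log (Real.GammaSeq (t*y) n) + (y-1)*(t*Real.log t) := by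
    intro y hy n hn
    rw [hlogGS y hy n hn, hlogGS (t*y) (by positivity) n hn, hF]
    simp only []
    rw [Finset.sum_sub_distrib]
    ring
  -- limits
  have hGSlim : ∀ (s : ℝ), 0 < s → Tendsto (fun n : ℕ => Real.log (Real.GammaSeq s n)) atTop
      (𝓝 (Real.log (Real.Gamma s))) := by
    intro s hs
    exact ((Real.continuousAt_log (ne_of_gt (Real.Gamma_pos_of_pos hs))).tendsto).comp
      (Real.GammaSeq_tendsto_Gamma s)
  have hlim : ∀ (y : ℝ), 0 < y → Tendsto (fun n : ℕ => F n y) atTop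
      (𝓝 (Real.log (Real.Gamma y) - Real.log (Real.Gamma (t*y)) + (y-1)*(t*Real.log t))) := by
    intro y hy
    apply Tendsto.congr' ?_ (((hGSlim y hy).sub (hGSlim (t*y) (by positivity))).add_const ((y-1)*(t*Real.log t)))
    filter_upwards [eventually_ge_atTop 1] with n hn
    exact (hFeq y hy n hn).symm
  -- pass inequality to the limit
  have hineq : Real.log (Real.Gamma 1) - Real.log (Real.Gamma (t*1)) + (1-1)*(t*Real.log t)
      ≤ Real.log (Real.Gamma x) - Real.log (Real.Gamma (t*x)) + (x-1)*(t*Real.log t) := by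
    apply le_of_tendsto_of_tendsto (hlim 1 one_pos) (hlim x hx0)
    filter_upwards [eventually_ge_atTop 128] with n hn
    exact hmono n hn
  rw [Real.Gamma_one, Real.log_one, mul_one] at hineq
  -- exponentiate
  have htx : (0:ℝ) < t*x := by positivity
  have heq : Real.log t * (-((x-1)*t)) = -((x-1)*(t*Real.log t)) := by ring
  have h5 : Real.log (Real.Gamma (t*x)) + Real.log t * (-((x-1)*t))
      ≤ Real.log (Real.Gamma x) + Real.log (Real.Gamma t) := by
    rw [heq]; linarith
  have h6 := Real.exp_le_exp.2 h5
  rw [Real.exp_add, Real.exp_add, Real.exp_log (Real.Gamma_pos_of_pos htx),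
    Real.exp_log (Real.Gamma_pos_of_pos hx0), Real.exp_log (Real.Gamma_pos_of_pos ht0)] at h6
  rwa [← Real.rpow_def_of_pos ht0] at h6



lemma moment_eval {β ν : ℝ} (hβ : 0 < β) (hν : 0 ≤ ν) :
    ∫ y : ℝ, |y| ^ ν * betaGaussianDensity β y
      = β ^ (ν/β) * Real.Gamma ((ν+1)/β) / Real.Gamma (1/β) := by
  have hβ' : β ≠ 0 := ne_of_gt hβ
  set σ : ℝ := β ^ (1/β) with hσdef
  have hσ : 0 < σ := Real.rpow_pos_of_pos hβ _
  set C : ℝ := 2 * σ * Real.Gamma (1 + 1/β) with hCdef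
  have hΓβ : 0 < Real.Gamma (1 + 1/β) := Real.Gamma_pos_of_pos (by positivity)
  have hC : 0 < C := by positivity
  have stepA : ∫ y : ℝ, |y| ^ ν * betaGaussianDensity β y
      = 2 * ∫ x in Set.Ioi (0:ℝ), x ^ ν * (Real.exp (-(x^β)/β) / C) := by
    rw [← integral_comp_abs (f := fun u : ℝ => u ^ ν * (Real.exp (-(u^β)/β) / C))]
    simp only [betaGaussianDensity, hCdef, hσdef]
  have hσβ : σ ^ β = β := by
    rw [hσdef, ← Real.rpow_mul (le_of_lt hβ), one_div_mul_cancel hβ', Real.rpow_one]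
  have stepC : ∫ x in Set.Ioi (0:ℝ), x ^ ν * Real.exp (-(x^β)/β)
      = σ * (σ ^ ν * ((1/β) * Real.Gamma ((ν+1)/β))) := by
    have h1 := integral_comp_mul_left_Ioi (fun u : ℝ => u ^ ν * Real.exp (-(u^β)/β)) 0 hσ
    rw [mul_zero] at h1
    have h2 : ∫ x in Set.Ioi (0:ℝ), (σ*x) ^ ν * Real.exp (-((σ*x)^β)/β)
        = ∫ x in Set.Ioi (0:ℝ), σ ^ ν * (x ^ ν * Real.exp (-(x^β))) := by
      apply setIntegral_congr_fun measurableSet_Ioi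
      intro x hx
      have hx0 : (0:ℝ) < x := hx
      dsimp only
      rw [Real.mul_rpow (le_of_lt hσ) (le_of_lt hx0), Real.mul_rpow (le_of_lt hσ) (le_of_lt hx0), hσβ]
      have h3 : -(β * x^β)/β = -(x^β) := by field_simp
      rw [h3]
      ring
    rw [h2] at h1
    rw [integral_const_mul, integral_rpow_mul_exp_neg_rpow hβ (by linarith : (-1:ℝ) < ν)] at h1
    have := h1.symm
    rw [smul_eq_mul] at this
    field_simp at this ⊢
    linarith [this]
  have stepB : ∫ x in Set.Ioi (0:ℝ), x ^ ν * (Real.exp (-(x^β)/β) / C)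
      = (∫ x in Set.Ioi (0:ℝ), x ^ ν * Real.exp (-(x^β)/β)) / C := by
    simp_rw [mul_div_assoc']
    exact integral_div C _
  have hΓadd : Real.Gamma (1 + 1/β) = (1/β) * Real.Gamma (1/β) := by
    rw [add_comm, Real.Gamma_add_one (by positivity : (1/β:ℝ) ≠ 0)]
  have hσν : σ ^ ν = β ^ (ν/β) := by
    rw [hσdef, ← Real.rpow_mul (le_of_lt hβ)]
    congr 1
    ring
  have hΓt : 0 < Real.Gamma (1/β) := Real.Gamma_pos_of_pos (by positivity)
  rw [stepA, stepB, stepC, hCdef, hΓadd, hσν]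
  field_simp


/-- For `β ≥ 1` and `ν ≥ 0`, the ν-th absolute moment of the β-Gaussian distribution
satisfies `β^{ν/β} Γ((ν+1)/β)/Γ(1/β) ≤ Γ(ν+1)`; equivalently, the absolute moments of
`φ_β` are dominated by those of the Laplace density `φ₁`. -/
theorem abs_moment_betaGaussian_le_laplace (β ν : ℝ) (hβ : 1 ≤ β) (hν : 0 ≤ ν) :
    β ^ (ν / β) * Real.Gamma ((ν + 1) / β) / Real.Gamma (1 / β) ≤ Real.Gamma (ν + 1) ∧
      (∫ y : ℝ, |y| ^ ν * betaGaussianDensity β y) ≤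
        (∫ y : ℝ, |y| ^ ν * betaGaussianDensity 1 y) := by
  have hβ0 : (0:ℝ) < β := lt_of_lt_of_le one_pos hβ
  have ht0 : (0:ℝ) < 1/β := by positivity
  have ht1 : (1:ℝ)/β ≤ 1 := by
    rw [div_le_one hβ0]; exact hβ
  have hx : (1:ℝ) ≤ ν + 1 := by linarith
  have key := gamma_key ht0 ht1 hx
  have e1 : (1/β)*(ν+1) = (ν+1)/β := by ring
  have e2 : -((ν+1-1)*(1/β)) = -(ν/β) := by ring
  rw [e1, e2] at key
  have e3 : ((1:ℝ)/β) ^ (-(ν/β)) = β ^ (ν/β) := by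
    rw [one_div, Real.inv_rpow (le_of_lt hβ0), Real.rpow_neg (le_of_lt hβ0), inv_inv]
  rw [e3] at key
  have hΓt : 0 < Real.Gamma (1/β) := Real.Gamma_pos_of_pos ht0
  have first : β ^ (ν/β) * Real.Gamma ((ν+1)/β) / Real.Gamma (1/β) ≤ Real.Gamma (ν+1) := by
    rw [div_le_iff₀ hΓt]
    nlinarith [key]
  refine ⟨first, ?_⟩
  rw [moment_eval hβ0 hν, moment_eval one_pos hν]
  rw [show ((ν+1)/(1:ℝ)) = ν+1 from div_one _, show ((1:ℝ)/1) = 1 by norm_num,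
    show ((ν:ℝ)/1) = ν from div_one _, Real.one_rpow, Real.Gamma_one]
  simpa using first
end

section
/- Let 0 ≤ α < 1, β ≥ 1, and ν ≥ 0. Then ∫_ℝ |y|^ν e^{α|y|} φ_β(y) dy ≤ ∫_ℝ |y|^ν e^{α|y|} φ_1(y) dy < ∞, where φ_β is the β-Gaussian density. -/
open Real MeasureTheory

open Real MeasureTheory Filter Topology Set
open scoped ENNReal NNReal

/-- Two-term artanh series lower bound. -/
lemma artanh_lower {v : ℝ} (h0 : 0 ≤ v) (h1 : v < 1) :
    2*v + 2/3*v^3 ≤ Real.log (1+v) - Real.log (1-v) := by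
  set f : ℝ → ℝ := fun x => Real.log (1+x) - Real.log (1-x) - (2*x + 2/3*x^3) with hf
  have hD : ∀ x, 0 ≤ x → x < 1 →
      HasDerivAt f (1/(1+x) - (-1)/(1-x) - (2 + 2/3*(3*x^2))) x := by
    intro x hx0 hx1
    have hx1' : (0:ℝ) < 1 - x := by linarith
    have hx0' : (0:ℝ) < 1 + x := by linarith
    have d1 : HasDerivAt (fun y : ℝ => Real.log (1+y)) (1/(1+x)) x := by
      have := (((hasDerivAt_id x).const_add 1).log (ne_of_gt hx0'))
      simpa using this
    have d2 : HasDerivAt (fun y : ℝ => Real.log (1-y)) ((-1)/(1-x)) x := by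
      have := (((hasDerivAt_const x (1:ℝ)).sub (hasDerivAt_id x)).log (ne_of_gt hx1'))
      simpa using this
    have d3 : HasDerivAt (fun y : ℝ => 2*y + 2/3*y^3) (2 + 2/3*(3*x^2)) x := by
      have p1 : HasDerivAt (fun y : ℝ => y^3) (3*x^2) x := by
        simpa using (hasDerivAt_pow 3 x)
      have := ((hasDerivAt_id x).const_mul 2).fun_add (p1.const_mul (2/3))
      simpa [mul_comm] using this
    exact (d1.sub d2).sub d3
  rcases eq_or_lt_of_le h0 with rfl | hv
  · simp [f]
  have mono : MonotoneOn f (Set.Icc 0 v) := by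
    apply monotoneOn_of_deriv_nonneg (convex_Icc 0 v)
    · intro x hx
      exact ((hD x hx.1 (lt_of_le_of_lt hx.2 h1)).continuousAt).continuousWithinAt
    · intro x hx
      rw [interior_Icc] at hx
      exact ((hD x hx.1.le (lt_trans hx.2 h1)).differentiableAt).differentiableWithinAt
    · intro x hx
      rw [interior_Icc] at hx
      have h0x : (0:ℝ) ≤ x := hx.1.le
      have h1x : x < 1 := lt_trans hx.2 h1
      rw [(hD x h0x h1x).deriv]
      have hx1' : (0:ℝ) < 1 - x := by linarith
      have hx0' : (0:ℝ) < 1 + x := by linarith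
      have e1 : 1/(1+x) - (-1)/(1-x) - (2 + 2/3*(3*x^2))
          = (2*x^4)/((1+x)*(1-x)) := by
        field_simp
        ring
      rw [e1]
      positivity
  have h0v : f 0 ≤ f v := mono (Set.left_mem_Icc.mpr hv.le) (Set.mem_Icc.mpr ⟨hv.le, le_rfl⟩) hv.le
  have hf0 : f 0 = 0 := by simp [f]
  rw [hf0] at h0v
  simp only [f] at h0v
  linarith

/-- Padé-type lower bound for `log (1+u)`. -/
lemma log_one_add_lb {u : ℝ} (hu : 0 ≤ u) :
    2*(u/(2+u)) + 2/3*(u/(2+u))^3 ≤ Real.log (1+u) := by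
  have h2u : (0:ℝ) < 2 + u := by linarith
  have hv0 : 0 ≤ u/(2+u) := div_nonneg hu h2u.le
  have hv1 : u/(2+u) < 1 := by rw [div_lt_one h2u]; linarith
  have key := artanh_lower hv0 hv1
  have e1 : 1 + u/(2+u) = (2*(1+u))/(2+u) := by field_simp; ring
  have e2 : 1 - u/(2+u) = 2/(2+u) := by field_simp; ring
  rw [e1, e2, Real.log_div (by positivity) (by positivity),
      Real.log_div (by positivity) (by positivity),
      Real.log_mul (by norm_num) (by positivity)] at key
  linarith

/-- The same bound in the form used for `log ((z+1)/z)`. -/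
lemma log_ratio_lb {z : ℝ} (hz : 0 < z) :
    2/(2*z+1) + 2/(3*(2*z+1)^3) ≤ Real.log ((z+1)/z) := by
  have hz' : z ≠ 0 := ne_of_gt hz
  have h1 : (1:ℝ) + 1/z = (z+1)/z := by field_simp
  have h2 : (1/z)/(2+1/z) = 1/(2*z+1) := by
    rw [div_div]
    congr 1
    field_simp
  have key := log_one_add_lb (u := 1/z) (by positivity)
  rw [h1, h2] at key
  have h3 : (2*z+1) ≠ 0 := by positivity
  calc 2/(2*z+1) + 2/(3*(2*z+1)^3)
      = 2*(1/(2*z+1)) + 2/3*(1/(2*z+1))^3 := by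
        field_simp
    _ ≤ _ := key
/-- The key elementary step inequality. -/
lemma step_ineq {t z : ℝ} (ht0 : 0 ≤ t) (hz : 1 ≤ z) :
    (z-t)/z^2 + (t-1/2)/(z*(z+1)) + (6*t-1)*(2*z+1)/(12*z^2*(z+1)^2)
      ≤ Real.log ((z+1)/z) := by
  have hz0 : (0:ℝ) < z := lt_of_lt_of_le one_pos hz
  refine le_trans ?_ (log_ratio_lb hz0)
  rw [← sub_nonneg]
  have hE : (2/(2*z+1) + 2/(3*(2*z+1)^3))
      - ((z-t)/z^2 + (t-1/2)/(z*(z+1)) + (6*t-1)*(2*z+1)/(12*z^2*(z+1)^2))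
      = (1 + 2*z + 2*z^2 + 6*t + 36*z*t + 72*z^2*t + 48*z^3*t)
        / (12*z^2*(z+1)^2*(2*z+1)^3) := by
    field_simp
    ring
  rw [hE]
  positivity

/-- The comparison function used for telescoping. -/
noncomputable def gA (t x : ℝ) : ℝ :=
  Real.log ((x+t)/x) + (t-1/2)/(x+t) + (6*t-1)/(12*(x+t)^2)

lemma gA_one_ge {t : ℝ} (ht0 : 0 < t) (ht1 : t ≤ 1) : 1 + Real.log t ≤ gA t 1 := by
  unfold gA
  have h1 : Real.log ((1+t)/1) = Real.log (1+t) := by norm_num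
  rw [h1]
  have key : 2/(2*t+1) ≤ Real.log ((t+1)/t) := by
    refine le_trans ?_ (log_ratio_lb ht0)
    have : 0 < 2/(3*(2*t+1)^3) := by positivity
    linarith
  have hlog : Real.log ((t+1)/t) = Real.log (t+1) - Real.log t :=
    Real.log_div (by positivity) (ne_of_gt ht0)
  rw [hlog] at key
  have hE : 2/(2*t+1) - (1 - (t-1/2)/(1+t) - (6*t-1)/(12*(1+t)^2))
      = (5-2*t)/(12*(1+t)^2*(2*t+1)) := by
    field_simp
    ring
  have hpos : 0 ≤ (5-2*t)/(12*(1+t)^2*(2*t+1)) := by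
    have : (0:ℝ) < 5 - 2*t := by linarith
    positivity
  have ht1' : Real.log (t+1) = Real.log (1+t) := by ring_nf
  rw [ht1'] at key
  linarith

lemma gA_tail_le {t : ℝ} (ht0 : 0 < t) (ht1 : t ≤ 1) {n : ℝ} (hn : 1 ≤ n) :
    gA t (n+1) ≤ 2/n := by
  unfold gA
  have hM : (0:ℝ) < n + 1 := by linarith
  have hMt : (0:ℝ) < n + 1 + t := by linarith
  have l1 : Real.log ((n+1+t)/(n+1)) ≤ t/(n+1) := by
    have := Real.log_le_sub_one_of_pos (x := (n+1+t)/(n+1)) (by positivity)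
    have e : (n+1+t)/(n+1) - 1 = t/(n+1) := by field_simp; ring
    linarith [e ▸ this]
  have l2 : (t-1/2)/(n+1+t) ≤ 1/(2*(n+1)) := by
    rw [div_le_div_iff₀ hMt (by positivity)]
    nlinarith
  have l3 : (6*t-1)/(12*(n+1+t)^2) ≤ 1/(2*(n+1)) := by
    rw [div_le_div_iff₀ (by positivity) (by positivity)]
    nlinarith
  have l4 : t/(n+1) ≤ 1/(n+1) := by gcongr
  have hn0 : (0:ℝ) < n := lt_of_lt_of_le one_pos hn
  have l5 : 1/(n+1) + 1/(2*(n+1)) + 1/(2*(n+1)) ≤ 2/n := by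
    rw [div_add_div _ _ (by positivity) (by positivity), div_add_div _ _ (by positivity) (by positivity),
      div_le_div_iff₀ (by positivity) (by positivity)]
    ring_nf
    nlinarith
  linarith

lemma per_term {t : ℝ} (ht0 : 0 < t) (ht1 : t ≤ 1) {x : ℝ} (hx : 1 ≤ x) :
    x/(x+t)^2 ≤ (Real.log (x+1) - Real.log x) - (gA t x - gA t (x+1)) := by
  have hx0 : (0:ℝ) < x := lt_of_lt_of_le one_pos hx
  have hz : (1:ℝ) ≤ x + t := by linarith
  have hz0 : (0:ℝ) < x + t := by linarith
  have hstep := step_ineq (t := t) (z := x + t) ht0.le hz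
  have l0 : Real.log ((x+t+1)/(x+t)) = Real.log (x+t+1) - Real.log (x+t) :=
    Real.log_div (by positivity) (by positivity)
  unfold gA
  have l1 : Real.log ((x+t)/x) = Real.log (x+t) - Real.log x :=
    Real.log_div (by positivity) (by positivity)
  have l2 : Real.log ((x+1+t)/(x+1)) = Real.log (x+t+1) - Real.log (x+1) := by
    rw [show x+1+t = x+t+1 by ring]
    exact Real.log_div (by positivity) (by positivity)
  rw [l1, l2, show x+1+t = x+t+1 by ring]
  have r1 : (t-1/2)/(x+t) - (t-1/2)/(x+t+1) = (t-1/2)/((x+t)*(x+t+1)) := by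
    field_simp
    ring
  have r2 : (6*t-1)/(12*(x+t)^2) - (6*t-1)/(12*(x+t+1)^2)
      = (6*t-1)*(2*(x+t)+1)/(12*(x+t)^2*(x+t+1)^2) := by
    field_simp
    ring
  have r3 : ((x+t)-t)/(x+t)^2 = x/(x+t)^2 := by ring_nf
  rw [l0] at hstep
  have hstep2 : x/(x+t)^2 + (t-1/2)/((x+t)*(x+t+1))
      + (6*t-1)*(2*(x+t)+1)/(12*(x+t)^2*(x+t+1)^2)
      ≤ Real.log (x+t+1) - Real.log (x+t) := by
    calc x/(x+t)^2 + (t-1/2)/((x+t)*(x+t+1))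
        + (6*t-1)*(2*(x+t)+1)/(12*(x+t)^2*(x+t+1)^2)
        = ((x+t)-t)/(x+t)^2 + (t-1/2)/((x+t)*((x+t)+1))
          + (6*t-1)*(2*(x+t)+1)/(12*(x+t)^2*((x+t)+1)^2) := by ring_nf
      _ ≤ _ := hstep
  linarith [hstep2, r1, r2]

lemma sum_inv_sq_bound {t : ℝ} (ht0 : 0 < t) (ht1 : t ≤ 1) {N : ℕ} (hN : 1 ≤ N) :
    ∑ i ∈ Finset.range N, ((i:ℝ)+1)/((i:ℝ)+1+t)^2
      ≤ Real.log ((N:ℝ)+1) - 1 - Real.log t + 2/(N:ℝ) := by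
  have key : ∑ i ∈ Finset.range N, ((i:ℝ)+1)/((i:ℝ)+1+t)^2
      ≤ ∑ i ∈ Finset.range N,
        (((fun j : ℕ => Real.log ((j:ℝ)+1)) (i+1) - (fun j : ℕ => Real.log ((j:ℝ)+1)) i)
          - ((fun j : ℕ => gA t ((j:ℝ)+1)) i - (fun j : ℕ => gA t ((j:ℝ)+1)) (i+1))) := by
    apply Finset.sum_le_sum
    intro i _
    simp only []
    have h1i : (1:ℝ) ≤ (i:ℝ)+1 := by
      have : (0:ℝ) ≤ (i:ℝ) := Nat.cast_nonneg i
      linarith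
    have hp := per_term ht0 ht1 h1i
    have e : ((i:ℝ)+1)+1 = ((i+1:ℕ):ℝ)+1 := by push_cast; ring
    rw [e] at hp
    exact hp
  rw [Finset.sum_sub_distrib, Finset.sum_range_sub (fun j : ℕ => Real.log ((j:ℝ)+1)) N,
    Finset.sum_range_sub' (fun j : ℕ => gA t ((j:ℝ)+1)) N] at key
  have hg1 := gA_one_ge ht0 ht1
  have hN1 : (1:ℝ) ≤ (N:ℝ) := by exact_mod_cast hN
  have hgN := gA_tail_le ht0 ht1 hN1
  simp only [Nat.cast_zero, zero_add] at key
  have hlog1 : Real.log (1:ℝ) = 0 := Real.log_one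
  linarith [key]
/-! ### The finite-`N` approximation of `log Γ(p) + log Γ(x) - log Γ(px) + (p-1) x log x` -/

noncomputable def phiN (p : ℝ) (N : ℕ) (t : ℝ) : ℝ :=
  (p-1)*(t*Real.log t) + (p + t - p*t)*Real.log N + Real.log (N.factorial : ℝ)
    - ∑ j ∈ Finset.range (N+1), (Real.log (p+j) + Real.log (t+j) - Real.log (p*t+j))

lemma phiN_one {p : ℝ} {N : ℕ} (hN : 1 ≤ N) :
    phiN p N 1 = Real.log N - Real.log (N+1) := by
  unfold phiN
  have e1 : ∀ j ∈ Finset.range (N+1),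
      Real.log (p+j) + Real.log (1+j) - Real.log (p*1+j) = Real.log ((j:ℝ)+1) := by
    intro j _
    rw [mul_one]
    ring_nf
  rw [Finset.sum_congr rfl e1]
  have e2 : ∑ j ∈ Finset.range (N+1), Real.log ((j:ℝ)+1) = Real.log (((N+1).factorial : ℕ) : ℝ) := by
    rw [← Real.log_prod (fun j _ => by positivity)]
    congr 1
    rw [← Finset.prod_range_add_one_eq_factorial (N+1), Nat.cast_prod]
    exact Finset.prod_congr rfl (fun j _ => by push_cast; ring)
  rw [e2]
  have e3 : (((N+1).factorial : ℕ) : ℝ) = ((N:ℝ)+1) * (N.factorial : ℕ) := by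
    rw [Nat.factorial_succ]
    push_cast
    ring
  rw [e3, Real.log_mul (by positivity) (by positivity)]
  simp

lemma log_gammaSeq_eq {s : ℝ} (hs : 0 < s) {N : ℕ} (hN : 1 ≤ N) :
    Real.log (Real.GammaSeq s N)
      = s*Real.log N + Real.log (N.factorial : ℝ)
        - ∑ j ∈ Finset.range (N+1), Real.log (s+j) := by
  have hN0 : (0:ℝ) < N := by exact_mod_cast hN
  have hprod : ∀ j ∈ Finset.range (N+1), s + (j:ℝ) ≠ 0 := by
    intro j _
    positivity
  have hprodpos : (0:ℝ) < ∏ j ∈ Finset.range (N+1), (s + (j:ℝ)) :=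
    Finset.prod_pos (fun j _ => by positivity)
  unfold Real.GammaSeq
  rw [Real.log_div (by positivity) (ne_of_gt hprodpos),
    Real.log_mul (by positivity) (by positivity),
    Real.log_rpow hN0, Real.log_prod hprod]

lemma phiN_eq_gammaSeq {p t : ℝ} (hp : 0 < p) (ht : 0 < t) {N : ℕ} (hN : 1 ≤ N) :
    phiN p N t = (p-1)*(t*Real.log t) + Real.log (Real.GammaSeq p N)
      + Real.log (Real.GammaSeq t N) - Real.log (Real.GammaSeq (p*t) N) := by
  rw [log_gammaSeq_eq hp hN, log_gammaSeq_eq ht hN, log_gammaSeq_eq (by positivity) hN]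
  unfold phiN
  rw [Finset.sum_sub_distrib, Finset.sum_add_distrib]
  ring

lemma phiN_hasDeriv {p t : ℝ} (hp : 1 ≤ p) (ht : 0 < t) (N : ℕ) :
    HasDerivAt (phiN p N)
      ((p-1)*(Real.log t + 1) + (1-p)*Real.log N
        - ∑ j ∈ Finset.range (N+1), (1/(t+j) - p/(p*t+j))) t := by
  have hp0 : (0:ℝ) < p := lt_of_lt_of_le one_pos hp
  have d1 : HasDerivAt (fun t : ℝ => (p-1)*(t*Real.log t)) ((p-1)*(Real.log t + 1)) t :=
    (Real.hasDerivAt_mul_log (ne_of_gt ht)).const_mul (p-1)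
  have d2 : HasDerivAt (fun t : ℝ => (p + t - p*t)*Real.log N) ((1-p)*Real.log N) t := by
    have h : HasDerivAt (fun t : ℝ => p + t - p*t) (1-p) t := by
      have := ((hasDerivAt_id t).const_add p).fun_sub ((hasDerivAt_id t).const_mul p)
      simpa using this
    exact h.mul_const _
  have d3 : HasDerivAt (fun _ : ℝ => Real.log (N.factorial : ℝ)) 0 t := hasDerivAt_const _ _
  have d4 : HasDerivAt (fun t : ℝ => ∑ j ∈ Finset.range (N+1),
      (Real.log (p+j) + Real.log (t+j) - Real.log (p*t+j)))
      (∑ j ∈ Finset.range (N+1), (1/(t+j) - p/(p*t+j))) t := by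
    apply HasDerivAt.fun_sum
    intro j _
    have hj : (0:ℝ) ≤ (j:ℝ) := Nat.cast_nonneg j
    have e1 : HasDerivAt (fun t : ℝ => Real.log (t+j)) (1/(t+j)) t := by
      have := ((hasDerivAt_id t).add_const (j:ℝ)).log (by positivity)
      simpa using this
    have e2 : HasDerivAt (fun t : ℝ => Real.log (p*t+j)) (p/(p*t+j)) t := by
      have := (((hasDerivAt_id t).const_mul p).add_const (j:ℝ)).log (by positivity)
      simpa [mul_comm] using this
    have := ((hasDerivAt_const t (Real.log (p+j))).fun_add e1).fun_sub e2
    simpa using this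
  have := ((d1.fun_add d2).fun_add d3).fun_sub d4
  unfold phiN
  simpa using this
lemma phiN_deriv_le {p t : ℝ} (hp : 1 ≤ p) (ht0 : 0 < t) (ht1 : t ≤ 1)
    {N : ℕ} (hN : 1 ≤ N) :
    (p-1)*(Real.log t + 1) + (1-p)*Real.log N
        - ∑ j ∈ Finset.range (N+1), (1/(t+j) - p/(p*t+j)) ≤ (p-1)*(3/N) := by
  have hp0 : (0:ℝ) < p := lt_of_lt_of_le one_pos hp
  have hN0 : (0:ℝ) < (N:ℝ) := by exact_mod_cast hN
  -- rewrite the sum with the j = 0 term removed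
  have hsum : - ∑ j ∈ Finset.range (N+1), (1/(t+j) - p/(p*t+j))
      = ∑ i ∈ Finset.range N, (p/(p*t+((i:ℝ)+1)) - 1/(t+((i:ℝ)+1))) := by
    rw [Finset.sum_range_succ' (fun j => (1/(t+(j:ℝ)) - p/(p*t+(j:ℝ)))) N]
    have h0 : 1/(t+((0:ℕ):ℝ)) - p/(p*t+((0:ℕ):ℝ)) = 0 := by
      simp only [Nat.cast_zero, add_zero]
      field_simp
      ring
    rw [h0, add_zero, ← Finset.sum_neg_distrib]
    apply Finset.sum_congr rfl
    intro i _
    push_cast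
    ring
  rw [sub_eq_add_neg, hsum]
  -- bound each term of the new sum
  have hterm : ∀ i ∈ Finset.range N,
      p/(p*t+((i:ℝ)+1)) - 1/(t+((i:ℝ)+1))
        ≤ (p-1) * (((i:ℝ)+1)/(((i:ℝ)+1)+t)^2) := by
    intro i _
    set x : ℝ := (i:ℝ)+1 with hx
    have hx1 : (1:ℝ) ≤ x := by
      have : (0:ℝ) ≤ (i:ℝ) := Nat.cast_nonneg i
      simp only [hx]
      linarith
    have hx0 : (0:ℝ) < x := lt_of_lt_of_le one_pos hx1
    have e : p/(p*t+x) - 1/(t+x) = (p-1)*x/((p*t+x)*(t+x)) := by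
      field_simp
      ring
    rw [e]
    have h1 : (p-1)*x/((p*t+x)*(t+x)) ≤ (p-1)*x/((x+t)^2) := by
      gcongr
      · nlinarith [mul_nonneg (mul_nonneg (by linarith : (0:ℝ) ≤ p-1) ht0.le)
          (by linarith : (0:ℝ) ≤ t+x)]
    calc (p-1)*x/((p*t+x)*(t+x)) ≤ (p-1)*x/((x+t)^2) := h1
      _ = (p-1) * (x/(x+t)^2) := by ring
  have hsum2 : ∑ i ∈ Finset.range N, (p/(p*t+((i:ℝ)+1)) - 1/(t+((i:ℝ)+1)))
      ≤ (p-1) * (Real.log ((N:ℝ)+1) - 1 - Real.log t + 2/(N:ℝ)) := by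
    calc ∑ i ∈ Finset.range N, (p/(p*t+((i:ℝ)+1)) - 1/(t+((i:ℝ)+1)))
        ≤ ∑ i ∈ Finset.range N, (p-1) * (((i:ℝ)+1)/(((i:ℝ)+1)+t)^2) :=
          Finset.sum_le_sum hterm
      _ = (p-1) * ∑ i ∈ Finset.range N, ((i:ℝ)+1)/(((i:ℝ)+1)+t)^2 := by
          rw [Finset.mul_sum]
      _ ≤ (p-1) * (Real.log ((N:ℝ)+1) - 1 - Real.log t + 2/(N:ℝ)) := by
          apply mul_le_mul_of_nonneg_left (sum_inv_sq_bound ht0 ht1 hN) (by linarith)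
  have hlogN : Real.log ((N:ℝ)+1) - Real.log (N:ℝ) ≤ 1/(N:ℝ) := by
    have h1 : Real.log ((N:ℝ)+1) - Real.log (N:ℝ) = Real.log (((N:ℝ)+1)/(N:ℝ)) :=
      (Real.log_div (by positivity) (by positivity)).symm
    have h2 := Real.log_le_sub_one_of_pos (x := ((N:ℝ)+1)/(N:ℝ)) (by positivity)
    have h3 : ((N:ℝ)+1)/(N:ℝ) - 1 = 1/(N:ℝ) := by field_simp; ring
    rw [h1]
    rw [h3] at h2
    exact h2
  have expand : (p-1)*(Real.log t + 1) + (1-p)*Real.log N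
      + (p-1) * (Real.log ((N:ℝ)+1) - 1 - Real.log t + 2/(N:ℝ))
      = (p-1) * ((Real.log ((N:ℝ)+1) - Real.log (N:ℝ)) + 2/(N:ℝ)) := by ring
  have final : (p-1) * ((Real.log ((N:ℝ)+1) - Real.log (N:ℝ)) + 2/(N:ℝ)) ≤ (p-1)*(3/N) := by
    apply mul_le_mul_of_nonneg_left _ (by linarith)
    have h5 : 1/(N:ℝ) + 2/(N:ℝ) = 3/(N:ℝ) := by ring
    linarith
  linarith [hsum2, final, expand]

lemma phiN_lower {p x : ℝ} (hp : 1 ≤ p) (hx0 : 0 < x) (hx1 : x ≤ 1)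
    {N : ℕ} (hN : 1 ≤ N) :
    -(1 + 3*(p-1))/(N:ℝ) ≤ phiN p N x := by
  have hN0 : (0:ℝ) < (N:ℝ) := by exact_mod_cast hN
  have hcoef : (0:ℝ) ≤ (p-1)*(3/(N:ℝ)) := mul_nonneg (by linarith) (by positivity)
  have key : phiN p N 1 ≤ phiN p N x + (p-1)*(3/(N:ℝ)) := by
    rcases eq_or_lt_of_le hx1 with rfl | hlt
    · linarith
    · obtain ⟨c, hc, hslope⟩ := exists_hasDerivAt_eq_slope (phiN p N)
        (fun u => (p-1)*(Real.log u + 1) + (1-p)*Real.log N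
          - ∑ j ∈ Finset.range (N+1), (1/(u+j) - p/(p*u+j))) hlt
        (fun u hu => (phiN_hasDeriv hp (lt_of_lt_of_le hx0 hu.1) N).continuousAt.continuousWithinAt)
        (fun u hu => phiN_hasDeriv hp (lt_trans hx0 hu.1) N)
      have hb := phiN_deriv_le hp (lt_trans hx0 hc.1) hc.2.le hN
      rw [hslope] at hb
      have h1x : (0:ℝ) < 1 - x := by linarith
      rw [div_le_iff₀ h1x] at hb
      have h2 : (p-1)*(3/(N:ℝ))*(1-x) ≤ (p-1)*(3/(N:ℝ))*1 :=
        mul_le_mul_of_nonneg_left (by linarith) hcoef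
      have h3 : (p-1)*(3/(N:ℝ))*1 = (p-1)*(3/(N:ℝ)) := by ring
      linarith
  have hval : phiN p N 1 = Real.log N - Real.log ((N:ℝ)+1) := by
    have := phiN_one (p := p) hN
    simpa using this
  have hlb : -(1/(N:ℝ)) ≤ Real.log (N:ℝ) - Real.log ((N:ℝ)+1) := by
    have h1 : Real.log ((N:ℝ)+1) - Real.log (N:ℝ) = Real.log (((N:ℝ)+1)/(N:ℝ)) :=
      (Real.log_div (by positivity) (by positivity)).symm
    have h2 := Real.log_le_sub_one_of_pos (x := ((N:ℝ)+1)/(N:ℝ)) (by positivity)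
    have h3 : ((N:ℝ)+1)/(N:ℝ) - 1 = 1/(N:ℝ) := by field_simp; ring
    rw [h3] at h2
    rw [← h1] at h2
    linarith
  have expand : -(1 + 3*(p-1))/(N:ℝ) = -(1/(N:ℝ)) - (p-1)*(3/(N:ℝ)) := by ring
  rw [expand]
  rw [hval] at key
  linarith [key, hlb]
/-- The fundamental Gamma inequality: for `p ≥ 1` and `0 < x ≤ 1`,
`Γ(px) ≤ x^((p-1)x) Γ(p) Γ(x)`. -/
lemma Gamma_mul_arg_le {p x : ℝ} (hp : 1 ≤ p) (hx0 : 0 < x) (hx1 : x ≤ 1) :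
    Real.Gamma (p*x) ≤ x ^ ((p-1)*x) * Real.Gamma p * Real.Gamma x := by
  have hp0 : (0:ℝ) < p := lt_of_lt_of_le one_pos hp
  have hpx : (0:ℝ) < p*x := mul_pos hp0 hx0
  have hGp : (0:ℝ) < Real.Gamma p := Real.Gamma_pos_of_pos hp0
  have hGx : (0:ℝ) < Real.Gamma x := Real.Gamma_pos_of_pos hx0
  have hGpx : (0:ℝ) < Real.Gamma (p*x) := Real.Gamma_pos_of_pos hpx
  -- the log-form inequality, obtained as a limit
  have hlog : 0 ≤ (p-1)*(x*Real.log x) + Real.log (Real.Gamma p)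
      + Real.log (Real.Gamma x) - Real.log (Real.Gamma (p*x)) := by
    have tendsto_phi : Filter.Tendsto (fun N : ℕ => phiN p N x) Filter.atTop
        (𝓝 ((p-1)*(x*Real.log x) + Real.log (Real.Gamma p)
          + Real.log (Real.Gamma x) - Real.log (Real.Gamma (p*x)))) := by
      have hGSp : Filter.Tendsto (fun N : ℕ => Real.log (Real.GammaSeq p N)) Filter.atTop
          (𝓝 (Real.log (Real.Gamma p))) :=
        ((Real.continuousAt_log hGp.ne').tendsto).comp (Real.GammaSeq_tendsto_Gamma p)
      have hGSx : Filter.Tendsto (fun N : ℕ => Real.log (Real.GammaSeq x N)) Filter.atTop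
          (𝓝 (Real.log (Real.Gamma x))) :=
        ((Real.continuousAt_log hGx.ne').tendsto).comp (Real.GammaSeq_tendsto_Gamma x)
      have hGSpx : Filter.Tendsto (fun N : ℕ => Real.log (Real.GammaSeq (p*x) N)) Filter.atTop
          (𝓝 (Real.log (Real.Gamma (p*x)))) :=
        ((Real.continuousAt_log hGpx.ne').tendsto).comp (Real.GammaSeq_tendsto_Gamma (p*x))
      have base : Filter.Tendsto (fun N : ℕ => (p-1)*(x*Real.log x)
          + Real.log (Real.GammaSeq p N) + Real.log (Real.GammaSeq x N)
          - Real.log (Real.GammaSeq (p*x) N)) Filter.atTop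
          (𝓝 ((p-1)*(x*Real.log x) + Real.log (Real.Gamma p)
            + Real.log (Real.Gamma x) - Real.log (Real.Gamma (p*x)))) :=
        (((tendsto_const_nhds.add hGSp).add hGSx).sub hGSpx)
      apply base.congr'
      filter_upwards [Filter.eventually_ge_atTop 1] with N hN
      exact (phiN_eq_gammaSeq hp0 hx0 hN).symm
    have tendsto_lb : Filter.Tendsto (fun N : ℕ => -(1 + 3*(p-1))/(N:ℝ)) Filter.atTop
        (𝓝 0) := tendsto_const_div_atTop_nhds_zero_nat _
    refine le_of_tendsto_of_tendsto tendsto_lb tendsto_phi ?_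
    filter_upwards [Filter.eventually_ge_atTop 1] with N hN
    exact phiN_lower hp hx0 hx1 hN
  -- exponentiate
  have h1 : Real.Gamma (p*x) = Real.exp (Real.log (Real.Gamma (p*x))) :=
    (Real.exp_log hGpx).symm
  have h2 : x ^ ((p-1)*x) * Real.Gamma p * Real.Gamma x
      = Real.exp ((p-1)*(x*Real.log x) + Real.log (Real.Gamma p) + Real.log (Real.Gamma x)) := by
    rw [Real.exp_add, Real.exp_add, Real.exp_log hGp, Real.exp_log hGx,
      Real.rpow_def_of_pos hx0]
    congr 2
    ring
  rw [h1, h2]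
  exact Real.exp_le_exp.mpr (by linarith)

/-- Moment form of the Gamma inequality. -/
lemma moment_ineq {m β : ℝ} (hm : 0 ≤ m) (hβ : 1 ≤ β) :
    β ^ (m/β) * Real.Gamma ((m+1)/β) ≤ Real.Gamma (m+1) * Real.Gamma (1/β) := by
  have hβ0 : (0:ℝ) < β := lt_of_lt_of_le one_pos hβ
  have hx0 : (0:ℝ) < 1/β := by positivity
  have hx1 : 1/β ≤ 1 := by
    rw [div_le_one hβ0]
    exact hβ
  have hkey := Gamma_mul_arg_le (p := m+1) (x := 1/β) (by linarith) hx0 hx1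
  have e1 : (m+1)*(1/β) = (m+1)/β := by ring
  rw [e1] at hkey
  have e2 : ((1:ℝ)/β) ^ ((m+1-1)*(1/β)) = β ^ (-(m/β)) := by
    rw [one_div, Real.inv_rpow hβ0.le, ← Real.rpow_neg hβ0.le]
    congr 1
    ring
  rw [e2] at hkey
  have hpow : (0:ℝ) < β ^ (m/β) := Real.rpow_pos_of_pos hβ0 _
  calc β ^ (m/β) * Real.Gamma ((m+1)/β)
      ≤ β ^ (m/β) * (β ^ (-(m/β)) * Real.Gamma (m+1) * Real.Gamma (1/β)) :=
        mul_le_mul_of_nonneg_left hkey hpow.le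
    _ = Real.Gamma (m+1) * Real.Gamma (1/β) := by
        rw [← mul_assoc, ← mul_assoc, ← Real.rpow_add hβ0]
        simp
/-! ### Integral computations -/

lemma exp_neg_div_eq (b : ℝ) : ∀ x : ℝ, (-(x^b)/b) = (-(1/b)*x^b) := fun x => by ring

lemma intOn_moment {m b : ℝ} (hm : -1 < m) (hb : 1 ≤ b) :
    IntegrableOn (fun r : ℝ => r ^ m * Real.exp (-(r^b)/b)) (Set.Ioi 0) := by
  have hb0 : (0:ℝ) < b := lt_of_lt_of_le one_pos hb
  simp_rw [exp_neg_div_eq b]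
  exact integrableOn_rpow_mul_exp_neg_mul_rpow hm hb0 (by positivity)

lemma int_moment_val {m b : ℝ} (hm : -1 < m) (hb : 1 ≤ b) :
    ∫ r in Set.Ioi (0:ℝ), r ^ m * Real.exp (-(r^b)/b)
      = b ^ ((m+1)/b) * ((1/b) * Real.Gamma ((m+1)/b)) := by
  have hb0 : (0:ℝ) < b := lt_of_lt_of_le one_pos hb
  simp_rw [exp_neg_div_eq b]
  rw [integral_rpow_mul_exp_neg_mul_rpow hb0 hm (by positivity)]
  have e : ((1:ℝ)/b) ^ (-(m+1)/b) = b ^ ((m+1)/b) := by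
    rw [one_div, Real.inv_rpow hb0.le, ← Real.rpow_neg hb0.le]
    congr 1
    ring
  rw [e, mul_assoc]

lemma int_moment_val_one {m : ℝ} (hm : -1 < m) :
    ∫ r in Set.Ioi (0:ℝ), r ^ m * Real.exp (-(r^(1:ℝ))/1) = Real.Gamma (m+1) := by
  rw [int_moment_val hm le_rfl]
  simp [Real.one_rpow]

/-- The key term-wise comparison, including normalisation constants. -/
lemma termwise_le {m β : ℝ} (hm : 0 ≤ m) (hβ : 1 ≤ β) :
    (β ^ ((m+1)/β) * ((1/β) * Real.Gamma ((m+1)/β))) / (2 * β ^ (1/β) * Real.Gamma (1 + 1/β))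
      ≤ Real.Gamma (m+1) / 2 := by
  have hβ0 : (0:ℝ) < β := lt_of_lt_of_le one_pos hβ
  have hG1β : (0:ℝ) < Real.Gamma (1/β) := Real.Gamma_pos_of_pos (by positivity)
  have hGm : (0:ℝ) < Real.Gamma ((m+1)/β) := Real.Gamma_pos_of_pos (by positivity)
  have hGadd : Real.Gamma (1 + 1/β) = (1/β) * Real.Gamma (1/β) := by
    rw [add_comm]
    exact Real.Gamma_add_one (by positivity)
  have hsplit : β ^ ((m+1)/β) = β ^ (m/β) * β ^ (1/β) := by
    rw [← Real.rpow_add hβ0]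
    congr 1
    ring
  have hpowβ : (0:ℝ) < β ^ (1/β) := Real.rpow_pos_of_pos hβ0 _
  have hpowm : (0:ℝ) < β ^ (m/β) := Real.rpow_pos_of_pos hβ0 _
  rw [hGadd, hsplit]
  have hden : (0:ℝ) < 2 * β ^ (1/β) * ((1/β) * Real.Gamma (1/β)) := by positivity
  rw [div_le_div_iff₀ hden two_pos]
  have hmom := moment_ineq hm hβ
  calc β ^ (m/β) * β ^ (1/β) * (1/β * Real.Gamma ((m+1)/β)) * 2
      = (β ^ (m/β) * Real.Gamma ((m+1)/β)) * (2 * β ^ (1/β) * (1/β)) := by ring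
    _ ≤ (Real.Gamma (m+1) * Real.Gamma (1/β)) * (2 * β ^ (1/β) * (1/β)) := by
        apply mul_le_mul_of_nonneg_right hmom
        positivity
    _ = Real.Gamma (m+1) * (2 * β ^ (1/β) * (1/β * Real.Gamma (1/β))) := by ring

lemma real_exp_eq_tsum (x : ℝ) : Real.exp x = ∑' n : ℕ, x ^ n / n.factorial := by
  rw [Real.exp_eq_exp_ℝ, NormedSpace.exp_eq_tsum_div]

/-- Ratio-test summability of the majorant series. -/
lemma summable_majorant {ν α : ℝ} (hν : 0 ≤ ν) (hα0 : 0 ≤ α) (hα1 : α < 1) :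
    Summable (fun k : ℕ => α ^ k / (k.factorial : ℝ) * Real.Gamma (ν + k + 1)) := by
  apply summable_of_ratio_norm_eventually_le (r := (1+α)/2) (by linarith)
  rw [Filter.eventually_atTop]
  refine ⟨⌈(2*ν+1)/(1-α)⌉₊, fun k hk => ?_⟩
  have hk' : (2*ν+1)/(1-α) ≤ (k:ℝ) := le_trans (Nat.le_ceil _) (by exact_mod_cast hk)
  have h1α : (0:ℝ) < 1 - α := by linarith
  have hk2 : 2*ν+1 ≤ (k:ℝ)*(1-α) := by
    rw [div_le_iff₀ h1α] at hk'
    linarith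
  have hpos : (0:ℝ) < ν + k + 1 := by positivity
  have hfac : (0:ℝ) < (k.factorial : ℝ) := by exact_mod_cast k.factorial_pos
  have hfk : (0:ℝ) ≤ α ^ k / (k.factorial : ℝ) * Real.Gamma (ν + k + 1) := by
    have := Real.Gamma_pos_of_pos hpos
    positivity
  have hfk1 : α ^ (k+1) / ((k+1).factorial : ℝ) * Real.Gamma (ν + ((k+1:ℕ):ℝ) + 1)
      = (α ^ k / (k.factorial : ℝ) * Real.Gamma (ν + k + 1)) * (α * (ν + k + 1) / (k+1)) := by
    have e1 : Real.Gamma (ν + ((k:ℝ)+1) + 1) = (ν + k + 1) * Real.Gamma (ν + k + 1) := by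
      rw [show ν + ((k:ℝ)+1) + 1 = (ν + k + 1) + 1 by ring]
      exact Real.Gamma_add_one (ne_of_gt hpos)
    have e2 : (((k+1).factorial : ℕ) : ℝ) = ((k:ℝ)+1) * (k.factorial : ℝ) := by
      rw [Nat.factorial_succ]
      push_cast
      ring
    push_cast
    rw [e1, e2]
    field_simp
    ring
  rw [norm_of_nonneg ?_, norm_of_nonneg hfk, hfk1]
  swap
  · rw [hfk1]
    have hαν : (0:ℝ) ≤ α * (ν + k + 1) / (k+1) := by positivity
    exact mul_nonneg hfk hαν
  rw [mul_comm ((1+α)/2) _]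
  apply mul_le_mul_of_nonneg_left _ hfk
  rw [div_le_iff₀ (by positivity : (0:ℝ) < (k:ℝ)+1)]
  have hαν2 : α * ν ≤ ν := mul_le_of_le_one_left hν hα1.le
  nlinarith [hk2, hα0, hα1]
/-! ### Series expansion of the weighted integral over `Ioi 0` -/

lemma main_Ioi {ν α b : ℝ} (hν : 0 ≤ ν) (hα0 : 0 ≤ α) (hα1 : α < 1) (hb : 1 ≤ b) :
    (∫ r in Set.Ioi (0:ℝ), r ^ ν * Real.exp (α*r)
        * (Real.exp (-(r^b)/b) / (2 * b ^ (1/b) * Real.Gamma (1 + 1/b))))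
      = ∑' k : ℕ, (α^k / (k.factorial:ℝ))
          * (b ^ ((ν+(k:ℝ)+1)/b) * ((1/b)*Real.Gamma ((ν+(k:ℝ)+1)/b)))
          / (2 * b ^ (1/b) * Real.Gamma (1 + 1/b)) := by
  have hb0 : (0:ℝ) < b := lt_of_lt_of_le one_pos hb
  set C : ℝ := 2 * b ^ (1/b) * Real.Gamma (1 + 1/b) with hCdef
  have hC : 0 < C := by
    have h1 : (0:ℝ) < 1 + 1/b := by positivity
    have h2 := Real.Gamma_pos_of_pos h1
    positivity
  set f : ℕ → ℝ → ℝ :=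
    fun k r => (α^k / (k.factorial:ℝ)) * (r ^ (ν + (k:ℝ)) * Real.exp (-(r^b)/b)) / C with hfdef
  have hm' : ∀ k : ℕ, (-1:ℝ) < ν + (k:ℝ) := fun k => by
    have := Nat.cast_nonneg (α := ℝ) k
    linarith
  have hintk : ∀ k : ℕ, IntegrableOn (f k) (Set.Ioi 0) := fun k =>
    ((intOn_moment (hm' k) hb).const_mul _).div_const _
  have hvalk : ∀ k : ℕ, ∫ r in Set.Ioi (0:ℝ), f k r
      = (α^k / (k.factorial:ℝ))
          * (b ^ ((ν+(k:ℝ)+1)/b) * ((1/b)*Real.Gamma ((ν+(k:ℝ)+1)/b))) / C := by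
    intro k
    simp only [hfdef]
    rw [integral_div, integral_const_mul, int_moment_val (hm' k) hb]
  have hnn : ∀ k : ℕ, 0 ≤ᵐ[volume.restrict (Set.Ioi 0)] f k := by
    intro k
    rw [Filter.EventuallyLE, ae_restrict_iff' measurableSet_Ioi]
    refine Filter.Eventually.of_forall (fun r hr => ?_)
    simp only [hfdef, Pi.zero_apply]
    apply div_nonneg _ hC.le
    exact mul_nonneg (div_nonneg (pow_nonneg hα0 k) (Nat.cast_nonneg _))
      (mul_nonneg (Real.rpow_nonneg (le_of_lt hr) _) (Real.exp_nonneg _))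
  have hmeas : ∀ k : ℕ, AEStronglyMeasurable (f k) (volume.restrict (Set.Ioi 0)) := by
    intro k
    have c1 : Continuous fun r : ℝ => r ^ (ν + (k:ℝ)) :=
      Real.continuous_rpow_const (by positivity)
    have c2 : Continuous fun r : ℝ => Real.exp (-(r^b)/b) :=
      Real.continuous_exp.comp (((Real.continuous_rpow_const (by positivity)).neg).div_const b)
    exact ((continuous_const.mul (c1.mul c2)).div_const _).aestronglyMeasurable.restrict
  -- summability of the values
  have hval_nonneg : ∀ k : ℕ, 0 ≤ (α^k / (k.factorial:ℝ))
      * (b ^ ((ν+(k:ℝ)+1)/b) * ((1/b)*Real.Gamma ((ν+(k:ℝ)+1)/b))) / C := by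
    intro k
    have hG : 0 < Real.Gamma ((ν+(k:ℝ)+1)/b) := Real.Gamma_pos_of_pos (by positivity)
    apply div_nonneg _ hC.le
    exact mul_nonneg (div_nonneg (pow_nonneg hα0 k) (Nat.cast_nonneg _))
      (by positivity)
  have hval_le : ∀ k : ℕ, (α^k / (k.factorial:ℝ))
      * (b ^ ((ν+(k:ℝ)+1)/b) * ((1/b)*Real.Gamma ((ν+(k:ℝ)+1)/b))) / C
      ≤ (α^k / (k.factorial:ℝ)) * (Real.Gamma (ν+(k:ℝ)+1) / 2) := by
    intro k
    have h := termwise_le (m := ν+(k:ℝ)) (add_nonneg hν (Nat.cast_nonneg k)) hb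
    rw [mul_div_assoc]
    exact mul_le_mul_of_nonneg_left h (div_nonneg (pow_nonneg hα0 k) (Nat.cast_nonneg _))
  have hsum_major : Summable (fun k : ℕ =>
      (α^k / (k.factorial:ℝ)) * (Real.Gamma (ν+(k:ℝ)+1) / 2)) := by
    have := (summable_majorant hν hα0 hα1).div_const 2
    apply this.congr
    intro k
    ring
  have hsum_val : Summable (fun k : ℕ => (α^k / (k.factorial:ℝ))
      * (b ^ ((ν+(k:ℝ)+1)/b) * ((1/b)*Real.Gamma ((ν+(k:ℝ)+1)/b))) / C) :=
    Summable.of_nonneg_of_le hval_nonneg hval_le hsum_major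
  -- the pointwise series identity
  have hpt : ∫ r in Set.Ioi (0:ℝ), r ^ ν * Real.exp (α*r) * (Real.exp (-(r^b)/b) / C)
      = ∫ r in Set.Ioi (0:ℝ), ∑' k : ℕ, f k r := by
    apply setIntegral_congr_fun measurableSet_Ioi
    intro r hr
    have hr0 : (0:ℝ) < r := hr
    dsimp only
    rw [real_exp_eq_tsum (α*r), mul_assoc, ← tsum_mul_right, ← tsum_mul_left]
    apply tsum_congr
    intro k
    simp only [hfdef]
    rw [mul_pow, Real.rpow_add hr0, Real.rpow_natCast]
    ring
  -- lintegral summability hypothesis for `integral_tsum`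
  have hlint : ∑' k : ℕ, ∫⁻ r in Set.Ioi (0:ℝ), ‖f k r‖₊ ≠ ⊤ := by
    have heq : ∀ k : ℕ, ∫⁻ r in Set.Ioi (0:ℝ), (‖f k r‖₊ : ℝ≥0∞)
        = ENNReal.ofReal ((α^k / (k.factorial:ℝ))
          * (b ^ ((ν+(k:ℝ)+1)/b) * ((1/b)*Real.Gamma ((ν+(k:ℝ)+1)/b))) / C) := by
      intro k
      have h1 : (fun r => (‖f k r‖₊ : ℝ≥0∞)) =ᵐ[volume.restrict (Set.Ioi 0)]
          (fun r => ENNReal.ofReal (f k r)) := by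
        filter_upwards [hnn k] with r hr
        rw [← enorm_eq_nnnorm, Real.enorm_eq_ofReal hr]
      rw [lintegral_congr_ae h1, ← ofReal_integral_eq_lintegral_ofReal (hintk k) (hnn k), hvalk k]
    rw [tsum_congr heq, ← ENNReal.ofReal_tsum_of_nonneg hval_nonneg hsum_val]
    exact ENNReal.ofReal_ne_top
  rw [hpt, integral_tsum hmeas hlint]
  exact tsum_congr hvalk

lemma Ioi_le {ν α β : ℝ} (hν : 0 ≤ ν) (hα0 : 0 ≤ α) (hα1 : α < 1) (hβ : 1 ≤ β) :
    (∫ r in Set.Ioi (0:ℝ), r ^ ν * Real.exp (α*r)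
        * (Real.exp (-(r^β)/β) / (2 * β ^ (1/β) * Real.Gamma (1 + 1/β))))
      ≤ ∫ r in Set.Ioi (0:ℝ), r ^ ν * Real.exp (α*r)
        * (Real.exp (-(r^(1:ℝ))/1) / (2 * (1:ℝ) ^ ((1:ℝ)/1) * Real.Gamma (1 + 1/1))) := by
  rw [main_Ioi hν hα0 hα1 hβ, main_Ioi hν hα0 hα1 (le_refl (1:ℝ))]
  have hone : ∀ k : ℕ, (α^k / (k.factorial:ℝ))
      * ((1:ℝ) ^ ((ν+(k:ℝ)+1)/(1:ℝ)) * ((1/(1:ℝ))*Real.Gamma ((ν+(k:ℝ)+1)/(1:ℝ))))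
      / (2 * (1:ℝ) ^ ((1:ℝ)/1) * Real.Gamma (1 + 1/1))
      = (α^k / (k.factorial:ℝ)) * (Real.Gamma (ν+(k:ℝ)+1) / 2) := by
    intro k
    rw [Real.one_rpow, Real.one_rpow, show (1:ℝ)+1/1 = 2 by norm_num, Real.Gamma_two, div_one]
    ring
  rw [tsum_congr hone]
  -- now compare term by term
  have hβ0 : (0:ℝ) < β := lt_of_lt_of_le one_pos hβ
  have hval_nonneg : ∀ k : ℕ, 0 ≤ (α^k / (k.factorial:ℝ))
      * (β ^ ((ν+(k:ℝ)+1)/β) * ((1/β)*Real.Gamma ((ν+(k:ℝ)+1)/β)))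
      / (2 * β ^ (1/β) * Real.Gamma (1 + 1/β)) := by
    intro k
    have hG : 0 < Real.Gamma ((ν+(k:ℝ)+1)/β) := Real.Gamma_pos_of_pos (by positivity)
    have hG2 : 0 < Real.Gamma (1 + 1/β) := Real.Gamma_pos_of_pos (by positivity)
    apply div_nonneg _ (by positivity)
    exact mul_nonneg (div_nonneg (pow_nonneg hα0 k) (Nat.cast_nonneg _)) (by positivity)
  have hval_le : ∀ k : ℕ, (α^k / (k.factorial:ℝ))
      * (β ^ ((ν+(k:ℝ)+1)/β) * ((1/β)*Real.Gamma ((ν+(k:ℝ)+1)/β)))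
      / (2 * β ^ (1/β) * Real.Gamma (1 + 1/β))
      ≤ (α^k / (k.factorial:ℝ)) * (Real.Gamma (ν+(k:ℝ)+1) / 2) := by
    intro k
    have h := termwise_le (m := ν+(k:ℝ)) (add_nonneg hν (Nat.cast_nonneg k)) hβ
    rw [mul_div_assoc]
    exact mul_le_mul_of_nonneg_left h (div_nonneg (pow_nonneg hα0 k) (Nat.cast_nonneg _))
  have hsum_major : Summable (fun k : ℕ =>
      (α^k / (k.factorial:ℝ)) * (Real.Gamma (ν+(k:ℝ)+1) / 2)) := by
    have := (summable_majorant hν hα0 hα1).div_const 2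
    apply this.congr
    intro k
    ring
  exact Summable.tsum_le_tsum hval_le
    (Summable.of_nonneg_of_le hval_nonneg hval_le hsum_major) hsum_major
/-! ### Integrability of the β = 1 integrand on ℝ -/

lemma integrable_one_version {ν α : ℝ} (hν : 0 ≤ ν) (hα0 : 0 ≤ α) (hα1 : α < 1) :
    Integrable (fun y : ℝ => |y| ^ ν * Real.exp (α*|y|)
      * (Real.exp (-(|y|^(1:ℝ))/1) / (2 * (1:ℝ) ^ ((1:ℝ)/1) * Real.Gamma (1 + 1/1)))) := by
  set F : ℝ → ℝ := fun r => r ^ ν * Real.exp (α*r)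
      * (Real.exp (-(r^(1:ℝ))/1) / (2 * (1:ℝ) ^ ((1:ℝ)/1) * Real.Gamma (1 + 1/1))) with hF
  have hFeq : F = fun r : ℝ => (r ^ ν * Real.exp (-(1-α)*r^(1:ℝ))) / 2 := by
    funext r
    have h2 : Real.exp (α*r) * Real.exp (-r) = Real.exp (-(1-α)*r) := by
      rw [← Real.exp_add]
      congr 1
      ring
    simp only [hF, Real.one_rpow, Real.rpow_one, mul_one, div_one]
    rw [show (1:ℝ)+1 = 2 by norm_num, Real.Gamma_two, mul_one, ← h2]
    ring
  have hIoi : IntegrableOn F (Set.Ioi 0) := by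
    rw [hFeq]
    exact (integrableOn_rpow_mul_exp_neg_mul_rpow (by linarith) zero_lt_one (by linarith)).div_const 2
  have habs_Ioi : IntegrableOn (fun y : ℝ => F |y|) (Set.Ioi 0) := by
    apply (integrableOn_congr_fun (fun y hy => ?_) measurableSet_Ioi).mpr hIoi
    rw [abs_of_pos hy]
  have habs_Iic : IntegrableOn (fun y : ℝ => F |y|) (Set.Iic 0) := by
    rw [← Measure.map_neg_eq_self (volume : Measure ℝ)]
    have m : MeasurableEmbedding fun x : ℝ => -x := (Homeomorph.neg ℝ).measurableEmbedding
    rw [m.integrableOn_map_iff]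
    simp_rw [Function.comp_def, abs_neg, neg_preimage, neg_Iic, neg_zero]
    exact (integrableOn_Ici_iff_integrableOn_Ioi (hb := by simp)).mpr habs_Ioi
  have : Integrable (fun y : ℝ => F |y|) := by
    rw [← integrableOn_univ, ← Set.Iic_union_Ioi (a := (0:ℝ))]
    exact habs_Iic.union habs_Ioi
  exact this

theorem weighted_abs_moment_betaGaussian_le' (α β ν : ℝ)
    (hα0 : 0 ≤ α) (hα1 : α < 1) (hβ : 1 ≤ β) (hν : 0 ≤ ν) :
    (∫ y : ℝ, |y| ^ ν * Real.exp (α * |y|)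
        * (Real.exp (-(|y| ^ β) / β) / (2 * β ^ (1 / β) * Real.Gamma (1 + 1 / β)))) ≤
        (∫ y : ℝ, |y| ^ ν * Real.exp (α * |y|)
          * (Real.exp (-(|y| ^ (1:ℝ)) / 1) / (2 * (1:ℝ) ^ ((1:ℝ) / 1) * Real.Gamma (1 + 1 / 1)))) ∧
      Integrable (fun y : ℝ => |y| ^ ν * Real.exp (α * |y|)
        * (Real.exp (-(|y| ^ (1:ℝ)) / 1) / (2 * (1:ℝ) ^ ((1:ℝ) / 1) * Real.Gamma (1 + 1 / 1)))) := by
  constructor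
  · have e1 : (∫ y : ℝ, |y| ^ ν * Real.exp (α * |y|)
        * (Real.exp (-(|y| ^ β) / β) / (2 * β ^ (1 / β) * Real.Gamma (1 + 1 / β))))
        = 2 * ∫ r in Set.Ioi (0:ℝ), r ^ ν * Real.exp (α * r)
          * (Real.exp (-(r ^ β) / β) / (2 * β ^ (1 / β) * Real.Gamma (1 + 1 / β))) :=
      integral_comp_abs (f := fun r => r ^ ν * Real.exp (α * r)
          * (Real.exp (-(r ^ β) / β) / (2 * β ^ (1 / β) * Real.Gamma (1 + 1 / β))))
    have e2 : (∫ y : ℝ, |y| ^ ν * Real.exp (α * |y|)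
        * (Real.exp (-(|y| ^ (1:ℝ)) / 1) / (2 * (1:ℝ) ^ ((1:ℝ) / 1) * Real.Gamma (1 + 1 / 1))))
        = 2 * ∫ r in Set.Ioi (0:ℝ), r ^ ν * Real.exp (α * r)
          * (Real.exp (-(r ^ (1:ℝ)) / 1) / (2 * (1:ℝ) ^ ((1:ℝ) / 1) * Real.Gamma (1 + 1 / 1))) :=
      integral_comp_abs (f := fun r => r ^ ν * Real.exp (α * r)
          * (Real.exp (-(r ^ (1:ℝ)) / 1) / (2 * (1:ℝ) ^ ((1:ℝ) / 1) * Real.Gamma (1 + 1 / 1))))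
    rw [e1, e2]
    have := Ioi_le (ν := ν) (α := α) (β := β) hν hα0 hα1 hβ
    linarith
  · exact integrable_one_version hν hα0 hα1
/-- For `0 ≤ α < 1`, `β ≥ 1` and `ν ≥ 0`:
`∫_ℝ |y|^ν e^{α|y|} φ_β(y) dy ≤ ∫_ℝ |y|^ν e^{α|y|} φ₁(y) dy < ∞`. -/
theorem weighted_abs_moment_betaGaussian_le (α β ν : ℝ)
    (hα0 : 0 ≤ α) (hα1 : α < 1) (hβ : 1 ≤ β) (hν : 0 ≤ ν) :
    (∫ y : ℝ, |y| ^ ν * Real.exp (α * |y|) * betaGaussianDensity β y) ≤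
        (∫ y : ℝ, |y| ^ ν * Real.exp (α * |y|) * betaGaussianDensity 1 y) ∧
      Integrable (fun y : ℝ => |y| ^ ν * Real.exp (α * |y|) * betaGaussianDensity 1 y) := by
  have h := weighted_abs_moment_betaGaussian_le' α β ν hα0 hα1 hβ hν
  simp only [betaGaussianDensity]
  exact h
end

section
/- Let X be a separable Banach space, let p ∈ (0,1), let (b_j) be a nonincreasing nonnegative sequence with Σ_j b_j^p < ∞, let (Θ_k)_{k≥0} be nonnegative reals, and set k = ⌈1/(1−p)⌉. Suppose g : [−1,1]^ℕ → X is continuously differentiable up to order k+1 with ‖∂^ν g(y)‖_X ≤ Θ_{|ν|} ∏_j b_j^{ν_j} for all y and all multi-indices ν with |ν| ≤ k+1, and that ‖g(y) − g(y_{≤s},0)‖_X → 0 as s → ∞ for a.e. y. Then there is a constant C > 0 independent of s such that ‖∫_{[−1,1]^ℕ} (g(y) − g(y_{≤s},0)) γ(dy)‖_X ≤ C s^{−2/p + 1}, where γ is the uniform product probability measure on [−1,1]^ℕ and (y_{≤s},0) denotes y with all coordinates beyond s set to zero. -/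
open MeasureTheory Filter

/-- Truncation of a parameter sequence: the coordinates beyond the first `s` are set to
zero, `(y_{≤s}, 0)`. -/
noncomputable def trunc (s : ℕ) (y : ℕ → ℝ) : ℕ → ℝ := fun j => if j < s then y j else 0

/-- `Dg` is the family of mixed partial derivatives (in the parametric variables) of `g`
up to total order `K + 1`: `Dg 0 = g`, and for every multi-index `ν` of order `≤ K`,
differentiating `Dg ν` in the `j`-th coordinate yields `Dg (ν + e_j)`. -/
def IsPDerivFamilyUpTo {X : Type*} [NormedAddCommGroup X] [NormedSpace ℝ X]
    (g : (ℕ → ℝ) → X) (Dg : (ℕ →₀ ℕ) → (ℕ → ℝ) → X) (K : ℕ) : Prop :=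
  Dg 0 = g ∧
    ∀ ν : ℕ →₀ ℕ, (ν.sum fun _ n => n) ≤ K → ∀ (j : ℕ) (y : ℕ → ℝ),
      HasDerivAt (fun t => Dg ν (Function.update y j t))
        (Dg (ν + Finsupp.single j 1) y) (y j)

/-!
Telescope over the coordinates: `g y - g (y_{≤s}, 0)` is the limit of the sums of the
increments `g (y_{≤m+1}, 0) - g (y_{≤m}, 0)`, `m ≥ s`. A second-order Taylor expansion in `y_m`
writes such an increment as `y_m ∂_m g (y_{≤m}, 0)` plus a remainder of norm at most
`Θ₂ b_m²`, and the linear term integrates to zero because under `γ` the coordinate `y_m` is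
centred and independent of `y_{<m}`. So the integral has norm at most
`Θ₂ Σ_{m ≥ s} b_m² ≤ Θ₂ b_s^{2-p} Σ_j b_j^p`, and since `b` is nonincreasing,
`s b_s^p ≤ Σ_j b_j^p`, whence `b_s^{2-p} ≤ (Σ_j b_j^p / s)^{(2-p)/p}`.
-/

open Set Function Topology
open scoped ENNReal

theorem continuous_trunc (s : ℕ) : Continuous (trunc s) :=
  continuous_pi fun j => by unfold trunc; split_ifs <;> fun_prop

theorem trunc_mem_Icc {s : ℕ} {y : ℕ → ℝ} (hy : ∀ j, y j ∈ Icc (-1 : ℝ) 1) (j : ℕ) :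
    trunc s y j ∈ Icc (-1 : ℝ) 1 := by
  unfold trunc
  split_ifs
  exacts [hy j, ⟨by norm_num, by norm_num⟩]

theorem update_trunc_self_zero (s : ℕ) (y : ℕ → ℝ) : update (trunc s y) s 0 = trunc s y := by
  simp [update_eq_self_iff, trunc]

theorem update_trunc_self (s : ℕ) (y : ℕ → ℝ) :
    update (trunc s y) s (y s) = trunc (s + 1) y := by
  funext j
  rcases lt_trichotomy j s with h | rfl | h
  · simp [trunc, h.ne, h, Nat.lt_succ_of_lt h]
  · simp [trunc]
  · simp [trunc, h.ne', h.not_gt, show ¬ j < s + 1 by omega]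

def extendByZero {m : ℕ} (x : Fin m → ℝ) : ℕ → ℝ := fun j => if h : j < m then x ⟨j, h⟩ else 0

theorem continuous_extendByZero (m : ℕ) : Continuous (extendByZero (m := m)) :=
  continuous_pi fun j => by unfold extendByZero; split_ifs <;> fun_prop

theorem trunc_eq_extendByZero (m : ℕ) (y : ℕ → ℝ) :
    trunc m y = extendByZero fun i : Fin m => y i := by
  funext j
  simp only [trunc, extendByZero]
  split_ifs <;> rfl

theorem isProbabilityMeasure_uniform_Icc :
    IsProbabilityMeasure ((2 : ℝ≥0∞)⁻¹ • volume.restrict (Icc (-1 : ℝ) 1)) := by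
  constructor
  rw [Measure.smul_apply, Measure.restrict_apply_univ, Real.volume_Icc, smul_eq_mul]
  norm_num
  exact ENNReal.inv_mul_cancel (by norm_num) (by norm_num)

theorem ae_mem_Icc_uniform_Icc :
    ∀ᵐ t ∂((2 : ℝ≥0∞)⁻¹ • volume.restrict (Icc (-1 : ℝ) 1)), t ∈ Icc (-1 : ℝ) 1 :=
  (ae_restrict_mem measurableSet_Icc).filter_mono (Measure.ae_smul_measure_le _)

theorem integral_id_uniform_Icc :
    ∫ t, t ∂((2 : ℝ≥0∞)⁻¹ • volume.restrict (Icc (-1 : ℝ) 1)) = 0 := by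
  rw [integral_smul_measure, integral_Icc_eq_integral_Ioc,
    ← intervalIntegral.integral_of_le (by norm_num), integral_id]
  norm_num

section ProductMeasure

variable {X : Type*} [NormedAddCommGroup X] {μ : Measure ℝ} {γ : Measure (ℕ → ℝ)}

theorem ae_forall_mem_of_map_eq_pi [SigmaFinite μ] {s : Set ℝ} (hs : ∀ᵐ t ∂μ, t ∈ s)
    (hmarg : ∀ n : ℕ, γ.map (fun y (i : Fin n) => y (i : ℕ)) = Measure.pi fun _ => μ) :
    ∀ᵐ y ∂γ, ∀ j, y j ∈ s := by
  refine ae_all_iff.2 fun j => ?_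
  have hj : ∀ᵐ x : Fin (j + 1) → ℝ ∂(γ.map fun y (i : Fin (j + 1)) => y (i : ℕ)),
      x (Fin.last j) ∈ s := by
    rw [hmarg]
    exact Measure.tendsto_eval_ae_ae.eventually hs
  exact ae_of_ae_map (measurable_pi_lambda _ fun i => measurable_pi_apply _).aemeasurable hj

theorem integral_smul_comp_trunc_eq_zero [NormedSpace ℝ X] [IsProbabilityMeasure μ]
    (hμ : ∫ t, t ∂μ = 0) {m : ℕ}
    (hmarg : γ.map (fun y (i : Fin (m + 1)) => y (i : ℕ)) = Measure.pi fun _ => μ)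
    {F : (ℕ → ℝ) → X} (hF : Continuous F) :
    ∫ y, y m • F (trunc m y) ∂γ = 0 := by
  -- Splitting off the last of the first `m + 1` coordinates makes the integral factorise.
  let e := MeasurableEquiv.piFinSuccAbove (fun _ : Fin (m + 1) => ℝ) (Fin.last m)
  let H : ℝ × (Fin m → ℝ) → X := fun z => z.1 • F (extendByZero z.2)
  have hH : Continuous H :=
    continuous_fst.smul (hF.comp ((continuous_extendByZero m).comp continuous_snd))
  calc ∫ y, y m • F (trunc m y) ∂γ = ∫ y, H (e fun i : Fin (m + 1) => y i) ∂γ := by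
        simp only [H, e, trunc_eq_extendByZero, MeasurableEquiv.piFinSuccAbove_apply,
          Fin.insertNthEquiv_last, Fin.snocEquiv_symm_apply, Fin.val_last]
        rfl
    _ = ∫ x, H (e x) ∂(Measure.pi fun _ => μ) := by
        rw [← hmarg, integral_map
          (measurable_pi_lambda _ fun i => measurable_pi_apply _).aemeasurable
          (hH.comp_stronglyMeasurable e.measurable.stronglyMeasurable).aestronglyMeasurable]
    _ = ∫ z, z.1 • F (extendByZero z.2) ∂(μ.prod (Measure.pi fun _ => μ)) :=
        (measurePreserving_piFinSuccAbove (fun _ => μ) (Fin.last m)).integral_comp' H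
    _ = 0 := by rw [integral_prod_smul (fun t => t) (fun x => F (extendByZero x)), hμ, zero_smul]

theorem integrable_comp_trunc [IsFiniteMeasure γ] (hcube : ∀ᵐ y ∂γ, ∀ j, y j ∈ Icc (-1 : ℝ) 1)
    {f : (ℕ → ℝ) → X} (hf : Continuous f) {A : ℝ}
    (hA : ∀ y : ℕ → ℝ, (∀ j, y j ∈ Icc (-1 : ℝ) 1) → ‖f y‖ ≤ A) (s : ℕ) :
    Integrable (fun y => f (trunc s y)) γ :=
  .of_bound (hf.comp (continuous_trunc s)).aestronglyMeasurable A
    (hcube.mono fun _ hy => hA _ (trunc_mem_Icc hy))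

theorem tendsto_integral_comp_trunc [NormedSpace ℝ X] [IsFiniteMeasure γ]
    (hcube : ∀ᵐ y ∂γ, ∀ j, y j ∈ Icc (-1 : ℝ) 1) {f : (ℕ → ℝ) → X} (hf : Continuous f) {A : ℝ}
    (hA : ∀ y : ℕ → ℝ, (∀ j, y j ∈ Icc (-1 : ℝ) 1) → ‖f y‖ ≤ A)
    (hlim : ∀ᵐ y ∂γ, Tendsto (fun s => f (trunc s y)) atTop (𝓝 (f y))) :
    Tendsto (fun s => ∫ y, f (trunc s y) ∂γ) atTop (𝓝 (∫ y, f y ∂γ)) :=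
  tendsto_integral_of_dominated_convergence (fun _ => A)
    (fun s => (hf.comp (continuous_trunc s)).aestronglyMeasurable) (integrable_const A)
    (fun _ => hcube.mono fun _ hy => hA _ (trunc_mem_Icc hy)) hlim

end ProductMeasure

theorem norm_sub_sub_smul_le_of_hasDerivAt {X : Type*} [NormedAddCommGroup X] [NormedSpace ℝ X]
    {f f' f'' : ℝ → X} {t C : ℝ}
    (hf : ∀ τ ∈ uIcc 0 t, HasDerivAt f (f' τ) τ) (hf' : ∀ τ ∈ uIcc 0 t, HasDerivAt f' (f'' τ) τ)
    (hC : ∀ τ ∈ uIcc 0 t, ‖f'' τ‖ ≤ C) :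
    ‖f t - f 0 - t • f' 0‖ ≤ C * t ^ 2 := by
  have hC0 : 0 ≤ C := (norm_nonneg (f'' 0)).trans (hC 0 left_mem_uIcc)
  have hseg : Convex ℝ (uIcc (0 : ℝ) t) := convex_uIcc 0 t
  have hf'_lip : ∀ τ ∈ uIcc 0 t, ‖f' τ - f' 0‖ ≤ C * |t| := fun τ hτ =>
    calc ‖f' τ - f' 0‖ ≤ C * ‖τ - 0‖ := hseg.norm_image_sub_le_of_norm_hasDerivWithin_le
          (fun x hx => (hf' x hx).hasDerivWithinAt) hC left_mem_uIcc hτ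
      _ ≤ C * |t| := by
          gcongr
          simpa using abs_sub_left_of_mem_uIcc hτ
  have hrem : ∀ τ ∈ uIcc 0 t, HasDerivAt (fun σ => f σ - σ • f' 0) (f' τ - f' 0) τ := fun τ hτ =>
    ((hf τ hτ).sub ((hasDerivAt_id' τ).smul_const (f' 0))).congr_deriv (by rw [one_smul])
  calc ‖f t - f 0 - t • f' 0‖ = ‖(f t - t • f' 0) - (f 0 - (0 : ℝ) • f' 0)‖ := by
        rw [zero_smul, sub_zero, sub_right_comm]
    _ ≤ C * |t| * ‖t - 0‖ := hseg.norm_image_sub_le_of_norm_hasDerivWithin_le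
          (fun x hx => (hrem x hx).hasDerivWithinAt) hf'_lip left_mem_uIcc right_mem_uIcc
    _ = C * t ^ 2 := by rw [sub_zero, Real.norm_eq_abs, mul_assoc, abs_mul_abs_self, sq]

namespace IsPDerivFamilyUpTo

variable {X : Type*} [NormedAddCommGroup X] [NormedSpace ℝ X]
variable {g : (ℕ → ℝ) → X} {Dg : (ℕ →₀ ℕ) → (ℕ → ℝ) → X} {K : ℕ}

theorem hasDerivAt_update (hDg : IsPDerivFamilyUpTo g Dg K) {ν : ℕ →₀ ℕ}
    (hν : (ν.sum fun _ n => n) ≤ K) (y : ℕ → ℝ) (j : ℕ) (t : ℝ) :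
    HasDerivAt (fun τ => Dg ν (update y j τ)) (Dg (ν + Finsupp.single j 1) (update y j t)) t := by
  simpa using hDg.2 ν hν j (update y j t)

theorem norm_trunc_succ_sub_sub_le (hDg : IsPDerivFamilyUpTo g Dg K) (hK : 1 ≤ K) {m : ℕ}
    {C : ℝ} (hC : ∀ y : ℕ → ℝ, (∀ j, y j ∈ Icc (-1 : ℝ) 1) → ‖Dg (Finsupp.single m 2) y‖ ≤ C)
    {y : ℕ → ℝ} (hy : ∀ j, y j ∈ Icc (-1 : ℝ) 1) :
    ‖g (trunc (m + 1) y) - g (trunc m y) - y m • Dg (Finsupp.single m 1) (trunc m y)‖ ≤ C := by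
  set z := trunc m y
  have hz : ∀ t ∈ Icc (-1 : ℝ) 1, ∀ j, update z m t j ∈ Icc (-1 : ℝ) 1 := fun t ht =>
    (forall_update_iff z fun _ x => x ∈ Icc (-1 : ℝ) 1).2 ⟨ht, fun j _ => trunc_mem_Icc hy j⟩
  have hseg : uIcc 0 (y m) ⊆ Icc (-1 : ℝ) 1 :=
    uIcc_subset_Icc ⟨by norm_num, by norm_num⟩ (hy m)
  have hC0 : 0 ≤ C := (norm_nonneg _).trans (hC z (trunc_mem_Icc hy))
  have htaylor := norm_sub_sub_smul_le_of_hasDerivAt (t := y m) (C := C)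
    (f := fun τ => g (update z m τ)) (f' := fun τ => Dg (Finsupp.single m 1) (update z m τ))
    (f'' := fun τ => Dg (Finsupp.single m 2) (update z m τ))
    (fun τ _ => by simpa [hDg.1] using hDg.hasDerivAt_update (ν := 0) (by simp) z m τ)
    (fun τ _ => by
      simpa [← Finsupp.single_add] using
        hDg.hasDerivAt_update (ν := Finsupp.single m 1) (by simpa using hK) z m τ)
    (fun τ hτ => hC _ (hz τ (hseg hτ)))
  have hsq : y m ^ 2 ≤ 1 := by
    rw [sq_le_one_iff_abs_le_one, abs_le]
    exact hy m
  simp only [z, update_trunc_self, update_trunc_self_zero] at htaylor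
  exact htaylor.trans (mul_le_of_le_one_right hC0 hsq)

theorem norm_integral_trunc_succ_sub_le {μ : Measure ℝ} [IsProbabilityMeasure μ]
    (hμ : ∫ t, t ∂μ = 0) {γ : Measure (ℕ → ℝ)} [IsProbabilityMeasure γ] {m : ℕ}
    (hmarg : γ.map (fun y (i : Fin (m + 1)) => y (i : ℕ)) = Measure.pi fun _ => μ)
    (hcube : ∀ᵐ y ∂γ, ∀ j, y j ∈ Icc (-1 : ℝ) 1)
    (hDg : IsPDerivFamilyUpTo g Dg K) (hK : 1 ≤ K)
    (hg : Continuous g) (hD₁ : Continuous (Dg (Finsupp.single m 1))) {A A₁ C : ℝ}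
    (hgA : ∀ y : ℕ → ℝ, (∀ j, y j ∈ Icc (-1 : ℝ) 1) → ‖g y‖ ≤ A)
    (hD₁A : ∀ y : ℕ → ℝ, (∀ j, y j ∈ Icc (-1 : ℝ) 1) → ‖Dg (Finsupp.single m 1) y‖ ≤ A₁)
    (hC : ∀ y : ℕ → ℝ, (∀ j, y j ∈ Icc (-1 : ℝ) 1) → ‖Dg (Finsupp.single m 2) y‖ ≤ C) :
    ‖∫ y, g (trunc (m + 1) y) ∂γ - ∫ y, g (trunc m y) ∂γ‖ ≤ C := by
  have hint := integrable_comp_trunc hcube hg hgA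
  have hincr : Integrable (fun y => g (trunc (m + 1) y) - g (trunc m y)) γ :=
    (hint _).sub (hint _)
  have hlin : Integrable (fun y => y m • Dg (Finsupp.single m 1) (trunc m y)) γ :=
    .of_bound ((continuous_apply m).smul (hD₁.comp (continuous_trunc m))).aestronglyMeasurable A₁
      (hcube.mono fun y hy => by
        rw [norm_smul]
        exact (mul_le_of_le_one_left (norm_nonneg _) (abs_le.2 (hy m))).trans
          (hD₁A _ (trunc_mem_Icc hy)))
  calc ‖∫ y, g (trunc (m + 1) y) ∂γ - ∫ y, g (trunc m y) ∂γ‖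
      = ‖∫ y, (g (trunc (m + 1) y) - g (trunc m y) -
          y m • Dg (Finsupp.single m 1) (trunc m y)) ∂γ‖ := by
        rw [integral_sub hincr hlin,
          integral_smul_comp_trunc_eq_zero hμ hmarg hD₁, sub_zero, integral_sub (hint _) (hint _)]
    _ ≤ C := by
        simpa using norm_integral_le_of_norm_le_const
          (hcube.mono fun y hy => hDg.norm_trunc_succ_sub_sub_le hK hC hy)

end IsPDerivFamilyUpTo

section Tail

variable {b : ℕ → ℝ} {p : ℝ}

theorem sq_le_rpow_mul_rpow {x a : ℝ} (hx : 0 ≤ x) (hxa : x ≤ a) (hp2 : p ≤ 2) :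
    x ^ 2 ≤ a ^ (2 - p) * x ^ p := by
  calc x ^ 2 = x ^ (2 - p) * x ^ p := by
        rw [← Real.rpow_add' hx (by norm_num), sub_add_cancel, Real.rpow_two]
    _ ≤ a ^ (2 - p) * x ^ p := by gcongr

theorem mul_rpow_le_tsum_of_antitone (hb0 : ∀ j, 0 ≤ b j) (hbmono : Antitone b) (hp : 0 ≤ p)
    (hbsum : Summable fun j => b j ^ p) (s : ℕ) :
    s * b s ^ p ≤ ∑' j, b j ^ p :=
  calc s * b s ^ p = ∑ _ ∈ Finset.range s, b s ^ p := by simp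
    _ ≤ ∑ j ∈ Finset.range s, b j ^ p := Finset.sum_le_sum fun _ hj => by
        gcongr
        exacts [hb0 s, hbmono (Finset.mem_range.1 hj).le]
    _ ≤ ∑' j, b j ^ p := hbsum.sum_le_tsum _ fun j _ => Real.rpow_nonneg (hb0 j) p

theorem summable_sq_of_antitone (hb0 : ∀ j, 0 ≤ b j) (hbmono : Antitone b) (hp2 : p ≤ 2)
    (hbsum : Summable fun j => b j ^ p) : Summable fun j => b j ^ 2 :=
  (hbsum.mul_left (b 0 ^ (2 - p))).of_nonneg_of_le (fun _ => sq_nonneg _)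
    fun j => sq_le_rpow_mul_rpow (hb0 j) (hbmono (Nat.zero_le j)) hp2

theorem tsum_sq_nat_add_le (hb0 : ∀ j, 0 ≤ b j) (hbmono : Antitone b) (hp0 : 0 < p)
    (hp2 : p ≤ 2) (hbsum : Summable fun j => b j ^ p) {s : ℕ} (hs : 1 ≤ s) :
    ∑' m, b (s + m) ^ 2 ≤ (∑' j, b j ^ p) ^ (2 / p) * (s : ℝ) ^ (-2 / p + 1) := by
  set B := ∑' j, b j ^ p
  have hB : 0 ≤ B := tsum_nonneg fun j => Real.rpow_nonneg (hb0 j) p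
  have hspos : (0 : ℝ) < s := by exact_mod_cast hs
  have hbs : b s ^ p ≤ B / s := by
    rw [le_div_iff₀ hspos, mul_comm]
    exact mul_rpow_le_tsum_of_antitone hb0 hbmono hp0.le hbsum s
  have htail : ∑' m, b (s + m) ^ p ≤ B :=
    (hbsum.comp_injective (add_right_injective s)).tsum_le_tsum_of_inj _ (add_right_injective s)
      (fun j _ => Real.rpow_nonneg (hb0 j) p) (fun _ => le_rfl) hbsum
  calc ∑' m, b (s + m) ^ 2 ≤ ∑' m, b s ^ (2 - p) * b (s + m) ^ p :=
        ((summable_sq_of_antitone hb0 hbmono hp2 hbsum).comp_injective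
          (add_right_injective s)).tsum_le_tsum
          (fun m => sq_le_rpow_mul_rpow (hb0 _) (hbmono (Nat.le_add_right s m)) hp2)
          ((hbsum.comp_injective (add_right_injective s)).mul_left _)
    _ = (b s ^ p) ^ ((2 - p) / p) * ∑' m, b (s + m) ^ p := by
        rw [tsum_mul_left, ← Real.rpow_mul (hb0 s), mul_div_cancel₀ _ hp0.ne']
    _ ≤ (B / s) ^ ((2 - p) / p) * B := by
        have hbs0 := hb0 s
        have hq : 0 ≤ (2 - p) / p := div_nonneg (by linarith) hp0.le
        exact mul_le_mul (by gcongr) htail (tsum_nonneg fun m => Real.rpow_nonneg (hb0 (s + m)) p)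
          (by positivity)
    _ = B ^ ((2 - p) / p + 1) * (s : ℝ) ^ (-((2 - p) / p)) := by
        rw [Real.div_rpow hB hspos.le, div_eq_mul_inv, ← Real.rpow_neg hspos.le, mul_right_comm,
          Real.rpow_add_one' hB (by positivity)]
    _ = B ^ (2 / p) * (s : ℝ) ^ (-2 / p + 1) := by
        congr 2 <;> field_simp <;> ring

theorem norm_sub_le_of_norm_succ_sub_le {X : Type*} [NormedAddCommGroup X] {F : ℕ → X} {L : X}
    (hF : Tendsto F atTop (𝓝 L)) {c : ℝ} (hc : 0 ≤ c) (hb0 : ∀ j, 0 ≤ b j)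
    (hbmono : Antitone b) (hp0 : 0 < p) (hp2 : p ≤ 2) (hbsum : Summable fun j => b j ^ p)
    (hstep : ∀ m, ‖F (m + 1) - F m‖ ≤ c * b m ^ 2) {s : ℕ} (hs : 1 ≤ s) :
    ‖L - F s‖ ≤ c * (∑' j, b j ^ p) ^ (2 / p) * (s : ℝ) ^ (-2 / p + 1) := by
  have hsum := (summable_sq_of_antitone hb0 hbmono hp2 hbsum).mul_left c
  calc ‖L - F s‖ = dist (F s) L := by rw [dist_comm, dist_eq_norm]
    _ ≤ ∑' m, c * b (s + m) ^ 2 := dist_le_tsum_of_dist_le_of_tendsto _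
          (fun m => by rw [dist_comm, dist_eq_norm]; exact hstep m) hsum hF s
    _ ≤ c * (∑' j, b j ^ p) ^ (2 / p) * (s : ℝ) ^ (-2 / p + 1) := by
        rw [tsum_mul_left, mul_assoc]
        exact mul_le_mul_of_nonneg_left (tsum_sq_nat_add_le hb0 hbmono hp0 hp2 hbsum hs) hc

end Tail

theorem dimension_truncation_uniform_general
    {X : Type*} [NormedAddCommGroup X] [NormedSpace ℝ X]
    (p : ℝ) (hp0 : 0 < p) (hp1 : p < 1)
    (b : ℕ → ℝ) (hb0 : ∀ j, 0 ≤ b j) (hbmono : Antitone b)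
    (hbsum : Summable fun j => b j ^ p)
    (Θ : ℕ → ℝ) (hΘ : ∀ n, 0 ≤ Θ n)
    (k : ℕ) (hk : k = ⌈1 / (1 - p)⌉₊)
    (g : (ℕ → ℝ) → X) (Dg : (ℕ →₀ ℕ) → (ℕ → ℝ) → X)
    (hDg : IsPDerivFamilyUpTo g Dg k)
    (hcont : ∀ ν : ℕ →₀ ℕ, (ν.sum fun _ n => n) ≤ k + 1 → Continuous (Dg ν))
    (hbound : ∀ ν : ℕ →₀ ℕ, (ν.sum fun _ n => n) ≤ k + 1 →
      ∀ y : ℕ → ℝ, (∀ j, y j ∈ Set.Icc (-1 : ℝ) 1) →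
        ‖Dg ν y‖ ≤ Θ (ν.sum fun _ n => n) * ∏ j ∈ ν.support, b j ^ ν j)
    (γ : Measure (ℕ → ℝ)) [IsProbabilityMeasure γ]
    (hmarg : ∀ n : ℕ, γ.map (fun y (i : Fin n) => y (i : ℕ)) =
      Measure.pi fun _ : Fin n =>
        (2 : ENNReal)⁻¹ • volume.restrict (Set.Icc (-1 : ℝ) 1))
    (hlim : ∀ᵐ y ∂γ, Tendsto (fun s => g (trunc s y)) atTop (nhds (g y))) :
    ∃ C > 0, ∀ s : ℕ, 1 ≤ s →
      ‖∫ y, (g y - g (trunc s y)) ∂γ‖ ≤ C * (s : ℝ) ^ (-2 / p + 1) := by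
  have hk1 : 1 ≤ k := hk ▸ Nat.one_le_ceil_iff.2 (one_div_pos.2 (sub_pos.2 hp1))
  have := isProbabilityMeasure_uniform_Icc
  have hcube := ae_forall_mem_of_map_eq_pi ae_mem_Icc_uniform_Icc hmarg
  have hDb : ∀ n ≤ k + 1, ∀ m y, (∀ j, y j ∈ Icc (-1 : ℝ) 1) →
      ‖Dg (Finsupp.single m n) y‖ ≤ Θ n * b m ^ n := fun n hn m y hy => by
    have h := hbound (Finsupp.single m n) (by rwa [Finsupp.sum_single_index rfl]) y hy
    rwa [Finsupp.sum_single_index rfl,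
      show ∏ j ∈ (Finsupp.single m n).support, b j ^ Finsupp.single m n j = b m ^ n from
        Finsupp.prod_single_index (pow_zero _)] at h
  have hg : Continuous g := hDg.1 ▸ hcont 0 (by simp)
  have hgb : ∀ y, (∀ j, y j ∈ Icc (-1 : ℝ) 1) → ‖g y‖ ≤ Θ 0 := fun y hy => by
    simpa [hDg.1] using hDb 0 (by omega) 0 y hy
  have hstep : ∀ m, ‖∫ y, g (trunc (m + 1) y) ∂γ - ∫ y, g (trunc m y) ∂γ‖ ≤ Θ 2 * b m ^ 2 :=
    fun m => hDg.norm_integral_trunc_succ_sub_le integral_id_uniform_Icc (hmarg (m + 1)) hcube hk1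
      hg (hcont _ (by simp)) hgb (hDb 1 (by omega) m) (hDb 2 (by omega) m)
  have hB : 0 ≤ ∑' j, b j ^ p := tsum_nonneg fun j => Real.rpow_nonneg (hb0 j) p
  refine ⟨Θ 2 * (∑' j, b j ^ p) ^ (2 / p) + 1,
    add_pos_of_nonneg_of_pos (mul_nonneg (hΘ 2) (Real.rpow_nonneg hB _)) one_pos, fun s hs => ?_⟩
  rw [integral_sub (.of_bound hg.aestronglyMeasurable _ (hcube.mono hgb))
    (integrable_comp_trunc hcube hg hgb s)]
  calc _ ≤ Θ 2 * (∑' j, b j ^ p) ^ (2 / p) * (s : ℝ) ^ (-2 / p + 1) :=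
        norm_sub_le_of_norm_succ_sub_le (tendsto_integral_comp_trunc hcube hg hgb hlim) (hΘ 2)
          hb0 hbmono hp0 (by linarith) hbsum hstep hs
    _ ≤ _ := by gcongr; linarith

/-- **Dimension truncation, uniform setting.** Let `X` be a separable Banach space,
`p ∈ (0,1)`, `b` a nonincreasing nonnegative sequence with `Σ_j b_j^p < ∞`, `Θ` a
nonnegative sequence, `k = ⌈1/(1−p)⌉`. Suppose `g : [−1,1]^ℕ → X` is continuously
differentiable up to order `k+1` with `‖∂^ν g(y)‖ ≤ Θ_{|ν|} ∏_j b_j^{ν_j}` for `|ν| ≤ k+1`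
and `g(y_{≤s},0) → g(y)` a.e. Then there is `C > 0`, independent of `s`, such that
`‖∫ (g(y) − g(y_{≤s},0)) γ(dy)‖ ≤ C s^{−2/p+1}` for all `s ≥ 1`, where `γ` is the uniform
product probability measure on `[−1,1]^ℕ` (characterized by its finite-dimensional
marginals). -/
theorem dimension_truncation_uniform
    {X : Type*} [NormedAddCommGroup X] [NormedSpace ℝ X] [CompleteSpace X]
    [TopologicalSpace.SeparableSpace X]
    (p : ℝ) (hp0 : 0 < p) (hp1 : p < 1)
    (b : ℕ → ℝ) (hb0 : ∀ j, 0 ≤ b j) (hbmono : Antitone b)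
    (hbsum : Summable fun j => b j ^ p)
    (Θ : ℕ → ℝ) (hΘ : ∀ n, 0 ≤ Θ n)
    (k : ℕ) (hk : k = ⌈1 / (1 - p)⌉₊)
    (g : (ℕ → ℝ) → X) (Dg : (ℕ →₀ ℕ) → (ℕ → ℝ) → X)
    (hDg : IsPDerivFamilyUpTo g Dg k)
    (hcont : ∀ ν : ℕ →₀ ℕ, (ν.sum fun _ n => n) ≤ k + 1 → Continuous (Dg ν))
    (hbound : ∀ ν : ℕ →₀ ℕ, (ν.sum fun _ n => n) ≤ k + 1 →
      ∀ y : ℕ → ℝ, (∀ j, y j ∈ Set.Icc (-1 : ℝ) 1) →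
        ‖Dg ν y‖ ≤ Θ (ν.sum fun _ n => n) * ∏ j ∈ ν.support, b j ^ ν j)
    (γ : Measure (ℕ → ℝ)) [IsProbabilityMeasure γ]
    (hmarg : ∀ n : ℕ, γ.map (fun y (i : Fin n) => y (i : ℕ)) =
      Measure.pi fun _ : Fin n =>
        (2 : ENNReal)⁻¹ • volume.restrict (Set.Icc (-1 : ℝ) 1))
    (hlim : ∀ᵐ y ∂γ, Tendsto (fun s => g (trunc s y)) atTop (nhds (g y))) :
    ∃ C > 0, ∀ s : ℕ, 1 ≤ s →
      ‖∫ y, (g y - g (trunc s y)) ∂γ‖ ≤ C * (s : ℝ) ^ (-2 / p + 1) :=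
  dimension_truncation_uniform_general p hp0 hp1 b hb0 hbmono hbsum Θ hΘ k hk g Dg hDg hcont hbound
    γ hmarg hlim
end
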